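/- arXiv:2410.08203 — 5 statements merged into one kernel-verified Lean document; each statement's English description precedes it below -/
import Mathlib

section
/- Let S and Q be two backbones of m residues given by maps N, A, C : Fin m → EuclideanSpace ℝ (Fin 3) and N', A', C' : Fin m → EuclideanSpace ℝ (Fin 3), each with all residual triples non-collinear. Then there exists a rigid motion f of ℝ³ (an orientation-preserving isometry) with N' = f ∘ N, A' = f ∘ A, C' = f ∘ C if and only if BRI(S) = BRI(Q) as m × 9 real matrices. -/
open scoped RealInnerProductSpace

noncomputable section

/-- The standard cross product on `EuclideanSpace ℝ (Fin 3)`. -/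
def cross3 (u v : EuclideanSpace ℝ (Fin 3)) : EuclideanSpace ℝ (Fin 3) :=
  (EuclideanSpace.equiv (Fin 3) ℝ).symm
    (crossProduct (EuclideanSpace.equiv (Fin 3) ℝ u) (EuclideanSpace.equiv (Fin 3) ℝ v))

/-- The first basis vector `u = (N - A)/‖N - A‖` of a residual triple. -/
def uT (N A : EuclideanSpace ℝ (Fin 3)) : EuclideanSpace ℝ (Fin 3) :=
  ‖N - A‖⁻¹ • (N - A)

/-- The Gram–Schmidt coefficient `b = ⟪C - A, N - A⟫/‖N - A‖²`. -/
def bT (N A C : EuclideanSpace ℝ (Fin 3)) : ℝ :=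
  ⟪C - A, N - A⟫ / ‖N - A‖ ^ 2

/-- The height vector `h = (C - A) - b • (N - A)`. -/
def hT (N A C : EuclideanSpace ℝ (Fin 3)) : EuclideanSpace ℝ (Fin 3) :=
  (C - A) - bT N A C • (N - A)

/-- The second basis vector `v = h/‖h‖`. -/
def vT (N A C : EuclideanSpace ℝ (Fin 3)) : EuclideanSpace ℝ (Fin 3) :=
  ‖hT N A C‖⁻¹ • hT N A C

/-- The third basis vector `w = u ×₃ v`. -/
def wT (N A C : EuclideanSpace ℝ (Fin 3)) : EuclideanSpace ℝ (Fin 3) :=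
  cross3 (uT N A) (vT N A C)

/-- A backbone of `m` residues has non-collinear residual triples. -/
def IsBackbone {m : ℕ} (N A C : Fin m → EuclideanSpace ℝ (Fin 3)) : Prop :=
  ∀ i, ¬ Collinear ℝ ({N i, A i, C i} : Set (EuclideanSpace ℝ (Fin 3)))

/-- The Backbone Rigid Invariant (BRI): an `m × 9` real matrix. Row `0` is
`(‖N₀ - A₀‖, ⟪C₀ - A₀, u₀⟫, ‖h₀‖, 0, …, 0)`, and row `i ≥ 1` consists of the
nine inner products of `N i - C (i-1)`, `A i - N i`, `C i - A i` with the basis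
vectors `u (i-1)`, `v (i-1)`, `w (i-1)` of the previous residue. -/
def BRI {m : ℕ} (N A C : Fin m → EuclideanSpace ℝ (Fin 3)) :
    Matrix (Fin m) (Fin 9) ℝ := fun i j =>
  if (i : ℕ) = 0 then
    ![‖N i - A i‖, ⟪C i - A i, uT (N i) (A i)⟫, ‖hT (N i) (A i) (C i)‖,
      0, 0, 0, 0, 0, 0] j
  else
    let p : Fin m := ⟨(i : ℕ) - 1, lt_of_le_of_lt (Nat.sub_le _ _) i.isLt⟩
    ![⟪N i - C p, uT (N p) (A p)⟫, ⟪N i - C p, vT (N p) (A p) (C p)⟫,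
        ⟪N i - C p, wT (N p) (A p) (C p)⟫,
      ⟪A i - N i, uT (N p) (A p)⟫, ⟪A i - N i, vT (N p) (A p) (C p)⟫,
        ⟪A i - N i, wT (N p) (A p) (C p)⟫,
      ⟪C i - A i, uT (N p) (A p)⟫, ⟪C i - A i, vT (N p) (A p) (C p)⟫,
        ⟪C i - A i, wT (N p) (A p) (C p)⟫] j

/-- The `L∞` metric between two `m × 9` real matrices: the maximum absolute
difference of corresponding entries. -/
def Linf {m : ℕ} (X Y : Matrix (Fin m) (Fin 9) ℝ) : ℝ :=
  ⨆ p : Fin m × Fin 9, |X p.1 p.2 - Y p.1 p.2|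

/-- A rigid motion of `ℝ³`: an (affine) isometry of `EuclideanSpace ℝ (Fin 3)`
whose linear part is orientation-preserving (determinant `1`). -/
def IsRigidMotion
    (f : EuclideanSpace ℝ (Fin 3) ≃ᵃⁱ[ℝ] EuclideanSpace ℝ (Fin 3)) : Prop :=
  LinearMap.det f.linearIsometryEquiv.toLinearEquiv.toLinearMap = 1


open Matrix

abbrev EE := EuclideanSpace ℝ (Fin 3)

lemma inner_toDot (x y : EE) : ⟪x, y⟫ = (x : Fin 3 → ℝ) ⬝ᵥ (y : Fin 3 → ℝ) := by
  simp [PiLp.inner_apply, dotProduct, RCLike.inner_apply, mul_comm]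

lemma cross3_eq (u v : EE) : cross3 u v = (WithLp.toLp 2 (crossProduct (u : Fin 3 → ℝ) v) : EE) := rfl

section triple
variable {N A C : EE}

lemma NA_ne (h : ¬ Collinear ℝ ({N, A, C} : Set EE)) : N - A ≠ 0 := by
  intro hne
  have hNA : N = A := by rwa [sub_eq_zero] at hne
  exact h <| by
    rw [collinear_iff_exists_forall_eq_smul_vadd]
    refine ⟨A, C - A, ?_⟩
    rintro p (rfl | rfl | rfl)
    · exact ⟨0, by simp [hNA]⟩
    · exact ⟨0, by simp⟩
    · exact ⟨1, by simp⟩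

lemma hT_ne (h : ¬ Collinear ℝ ({N, A, C} : Set EE)) : hT N A C ≠ 0 := by
  intro hne
  have hCA : C - A = bT N A C • (N - A) := by
    have := sub_eq_zero.mp hne
    simpa [hT] using this
  exact h <| by
    rw [collinear_iff_exists_forall_eq_smul_vadd]
    refine ⟨A, N - A, ?_⟩
    rintro p (rfl | rfl | rfl)
    · exact ⟨1, by simp⟩
    · exact ⟨0, by simp⟩
    · exact ⟨_, by rw [← hCA]; simp⟩

lemma norm_uT (h : ¬ Collinear ℝ ({N, A, C} : Set EE)) : ‖uT N A‖ = 1 := by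
  have := NA_ne h
  simpa [uT] using norm_smul_inv_norm (𝕜 := ℝ) this

lemma norm_vT (h : ¬ Collinear ℝ ({N, A, C} : Set EE)) : ‖vT N A C‖ = 1 := by
  have := hT_ne h
  simpa [vT] using norm_smul_inv_norm (𝕜 := ℝ) this

lemma inner_NA_hT (h : ¬ Collinear ℝ ({N, A, C} : Set EE)) : ⟪N - A, hT N A C⟫ = 0 := by
  have hne : ‖N - A‖ ≠ 0 := norm_ne_zero_iff.mpr (NA_ne h)
  rw [hT, inner_sub_right, real_inner_smul_right, bT, real_inner_self_eq_norm_sq]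
  rw [real_inner_comm]
  field_simp
  ring

lemma inner_uT_vT (h : ¬ Collinear ℝ ({N, A, C} : Set EE)) : ⟪uT N A, vT N A C⟫ = 0 := by
  rw [uT, vT, real_inner_smul_left, real_inner_smul_right, inner_NA_hT h]
  ring
end triple

section frame
variable {N A C : EE}

lemma inner_uT_wT (h : ¬ Collinear ℝ ({N, A, C} : Set EE)) : ⟪uT N A, wT N A C⟫ = 0 := by
  rw [wT, cross3_eq, inner_toDot]
  exact dot_self_cross _ _

lemma inner_vT_wT (h : ¬ Collinear ℝ ({N, A, C} : Set EE)) : ⟪vT N A C, wT N A C⟫ = 0 := by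
  rw [wT, cross3_eq, inner_toDot]
  exact dot_cross_self _ _

lemma inner_wT_wT (h : ¬ Collinear ℝ ({N, A, C} : Set EE)) : ⟪wT N A C, wT N A C⟫ = 1 := by
  rw [wT, cross3_eq, inner_toDot]
  have e := cross_dot_cross (uT N A : Fin 3 → ℝ) (vT N A C) (uT N A) (vT N A C)
  rw [e]
  have h1 : (uT N A : Fin 3 → ℝ) ⬝ᵥ (uT N A : Fin 3 → ℝ) = 1 := by
    rw [← inner_toDot, real_inner_self_eq_norm_mul_norm, norm_uT h]; ring
  have h2 : (vT N A C : Fin 3 → ℝ) ⬝ᵥ (vT N A C : Fin 3 → ℝ) = 1 := by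
    rw [← inner_toDot, real_inner_self_eq_norm_mul_norm, norm_vT h]; ring
  have h3 : (uT N A : Fin 3 → ℝ) ⬝ᵥ (vT N A C : Fin 3 → ℝ) = 0 := by
    rw [← inner_toDot]; exact inner_uT_vT h
  have h4 : (vT N A C : Fin 3 → ℝ) ⬝ᵥ (uT N A : Fin 3 → ℝ) = 0 := by
    rw [← inner_toDot, real_inner_comm]; exact inner_uT_vT h
  rw [h1, h2, h3, h4]; ring

def frameV (N A C : EE) : Fin 3 → EE := ![uT N A, vT N A C, wT N A C]

lemma frame_orthonormal (h : ¬ Collinear ℝ ({N, A, C} : Set EE)) :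
    Orthonormal ℝ (frameV N A C) := by
  rw [orthonormal_iff_ite]
  have huu : ⟪uT N A, uT N A⟫ = 1 := by
    rw [real_inner_self_eq_norm_mul_norm, norm_uT h]; ring
  have hvv : ⟪vT N A C, vT N A C⟫ = 1 := by
    rw [real_inner_self_eq_norm_mul_norm, norm_vT h]; ring
  have hww := inner_wT_wT h
  have huv := inner_uT_vT h
  have huw := inner_uT_wT h
  have hvw := inner_vT_wT h
  have hvu : ⟪vT N A C, uT N A⟫ = 0 := by rw [real_inner_comm]; exact huv
  have hwu : ⟪wT N A C, uT N A⟫ = 0 := by rw [real_inner_comm]; exact huw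
  have hwv : ⟪wT N A C, vT N A C⟫ = 0 := by rw [real_inner_comm]; exact hvw
  intro i j
  fin_cases i <;> fin_cases j <;>
    first
    | exact huu | exact hvv | exact hww | exact huv | exact hvu
    | exact huw | exact hwu | exact hvw | exact hwv

def frameOB (h : ¬ Collinear ℝ ({N, A, C} : Set EE)) : OrthonormalBasis (Fin 3) ℝ EE :=
  OrthonormalBasis.mk (frame_orthonormal h)
    (by
      rw [(frame_orthonormal h).linearIndependent.span_eq_top_of_card_eq_finrank (by simp)])

@[simp] lemma frameOB_apply (h : ¬ Collinear ℝ ({N, A, C} : Set EE)) (k : Fin 3) :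
    frameOB h k = frameV N A C k := by
  simp [frameOB]

lemma ext_frame (h : ¬ Collinear ℝ ({N, A, C} : Set EE)) {x y : EE}
    (h0 : ⟪x, uT N A⟫ = ⟪y, uT N A⟫) (h1 : ⟪x, vT N A C⟫ = ⟪y, vT N A C⟫)
    (h2 : ⟪x, wT N A C⟫ = ⟪y, wT N A C⟫) : x = y := by
  have h0' : ⟪uT N A, x⟫ = ⟪uT N A, y⟫ := by
    rw [real_inner_comm, h0, real_inner_comm]
  have h1' : ⟪vT N A C, x⟫ = ⟪vT N A C, y⟫ := by
    rw [real_inner_comm, h1, real_inner_comm]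
  have h2' : ⟪wT N A C, x⟫ = ⟪wT N A C, y⟫ := by
    rw [real_inner_comm, h2, real_inner_comm]
  apply (frameOB h).repr.injective
  ext k
  rw [(frameOB h).repr_apply_apply, (frameOB h).repr_apply_apply]
  fin_cases k <;> simp only [frameOB_apply]
  · exact h0'
  · exact h1'
  · exact h2'

end frame

section vals
variable {N A C : EE}

lemma inner_NA_uT (h : ¬ Collinear ℝ ({N, A, C} : Set EE)) : ⟪N - A, uT N A⟫ = ‖N - A‖ := by
  have hne : ‖N - A‖ ≠ 0 := norm_ne_zero_iff.mpr (NA_ne h)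
  rw [uT, real_inner_smul_right, real_inner_self_eq_norm_sq]
  field_simp

lemma inner_NA_vT (h : ¬ Collinear ℝ ({N, A, C} : Set EE)) : ⟪N - A, vT N A C⟫ = 0 := by
  rw [vT, real_inner_smul_right, inner_NA_hT h]; ring

lemma NA_eq_smul_uT : N - A = ‖N - A‖ • uT N A := by
  by_cases hne : N - A = 0
  · simp [uT, hne]
  · rw [uT, smul_smul, mul_inv_cancel₀ (norm_ne_zero_iff.mpr hne), one_smul]

lemma hT_eq_smul_vT : hT N A C = ‖hT N A C‖ • vT N A C := by
  by_cases hne : hT N A C = 0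
  · simp [vT, hne]
  · rw [vT, smul_smul, mul_inv_cancel₀ (norm_ne_zero_iff.mpr hne), one_smul]

lemma inner_NA_wT (h : ¬ Collinear ℝ ({N, A, C} : Set EE)) : ⟪N - A, wT N A C⟫ = 0 := by
  rw [NA_eq_smul_uT, real_inner_smul_left, inner_uT_wT h]; ring

lemma CA_decomp : C - A = bT N A C • (N - A) + hT N A C := by
  rw [hT]; abel

lemma inner_hT_vT : ⟪hT N A C, vT N A C⟫ = ‖hT N A C‖ := by
  by_cases hne : hT N A C = 0
  · simp [hne]
  · rw [vT, real_inner_smul_right, real_inner_self_eq_norm_mul_norm]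
    field_simp

lemma inner_hT_wT (h : ¬ Collinear ℝ ({N, A, C} : Set EE)) : ⟪hT N A C, wT N A C⟫ = 0 := by
  rw [hT_eq_smul_vT, real_inner_smul_left, inner_vT_wT h]; ring

lemma inner_CA_vT (h : ¬ Collinear ℝ ({N, A, C} : Set EE)) :
    ⟪C - A, vT N A C⟫ = ‖hT N A C‖ := by
  rw [CA_decomp, inner_add_left, real_inner_smul_left, inner_NA_vT h, inner_hT_vT]
  ring

lemma inner_CA_wT (h : ¬ Collinear ℝ ({N, A, C} : Set EE)) : ⟪C - A, wT N A C⟫ = 0 := by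
  rw [CA_decomp, inner_add_left, real_inner_smul_left, inner_NA_wT h, inner_hT_wT h]
  ring

end vals

section mat

def stdB : Module.Basis (Fin 3) ℝ EE := (EuclideanSpace.basisFun (Fin 3) ℝ).toBasis

def matOf (L : EE →ₗ[ℝ] EE) : Matrix (Fin 3) (Fin 3) ℝ := LinearMap.toMatrix stdB stdB L

lemma matOf_mulVec (L : EE →ₗ[ℝ] EE) (x : EE) :
    matOf L *ᵥ (x : Fin 3 → ℝ) = (L x : Fin 3 → ℝ) := by
  have hx : (∑ j : Fin 3, x j • stdB j) = x := by
    conv_rhs => rw [← stdB.sum_repr x]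
    refine Finset.sum_congr rfl fun j _ => ?_
    simp [stdB]
  funext i
  rw [mulVec, dotProduct]
  have hent : ∀ j, matOf L i j = (L (stdB j) : Fin 3 → ℝ) i := by
    intro j
    rw [matOf, LinearMap.toMatrix_apply]
    simp [stdB]
  simp only [hent]
  conv_rhs => rw [← hx]
  rw [map_sum]
  rw [show ((∑ j : Fin 3, L (x j • stdB j) : EE) : Fin 3 → ℝ) i
      = ∑ j : Fin 3, (L (x j • stdB j) : Fin 3 → ℝ) i by rw [WithLp.ofLp_sum, Finset.sum_apply]]
  refine Finset.sum_congr rfl fun j _ => ?_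
  rw [_root_.map_smul]
  show L (stdB j) i * x j = x j • (L (stdB j)) i
  rw [smul_eq_mul, mul_comm]

lemma det_rows_mulVec (M : Matrix (Fin 3) (Fin 3) ℝ) (a b c : Fin 3 → ℝ) :
    Matrix.det ![M *ᵥ a, M *ᵥ b, M *ᵥ c] = M.det * Matrix.det ![a, b, c] := by
  have key : (Matrix.of ![M *ᵥ a, M *ᵥ b, M *ᵥ c] : Matrix (Fin 3) (Fin 3) ℝ) =
      (Matrix.of ![a, b, c] : Matrix (Fin 3) (Fin 3) ℝ) * Mᵀ := by
    funext k i
    fin_cases k <;> simp [Matrix.mul_apply, mulVec, dotProduct, mul_comm]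
  show (Matrix.of ![M *ᵥ a, M *ᵥ b, M *ᵥ c]).det = _
  rw [key, Matrix.det_mul, Matrix.det_transpose, mul_comm]
  rfl

end mat

section cross

lemma map_cross3 (L : EE ≃ₗᵢ[ℝ] EE)
    (hdet : LinearMap.det (L.toLinearEquiv.toLinearMap) = 1) (a b : EE) :
    L (cross3 a b) = cross3 (L a) (L b) := by
  apply ext_inner_left ℝ
  intro z
  obtain ⟨c, rfl⟩ : ∃ c, L c = z := ⟨L.symm z, by simp⟩
  set K := L.toLinearEquiv.toLinearMap with hK
  have hKL : ∀ x : EE, K x = L x := fun _ => rfl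
  have key : ∀ x : EE, ((L x : EE) : Fin 3 → ℝ) = matOf K *ᵥ (x : Fin 3 → ℝ) := by
    intro x
    rw [matOf_mulVec K x, hKL]
  rw [L.inner_map_map, inner_toDot, inner_toDot, cross3_eq, cross3_eq]
  have e1 : ((c : EE) : Fin 3 → ℝ) ⬝ᵥ (WithLp.toLp 2 (crossProduct (a : Fin 3 → ℝ) (b : Fin 3 → ℝ)) : EE) =
      Matrix.det ![(c : Fin 3 → ℝ), a, b] := triple_product_eq_det _ _ _
  have e2 : ((L c : EE) : Fin 3 → ℝ) ⬝ᵥ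
        (WithLp.toLp 2 (crossProduct ((L a : EE) : Fin 3 → ℝ) ((L b : EE) : Fin 3 → ℝ)) : EE) =
      Matrix.det ![((L c : EE) : Fin 3 → ℝ), ((L a : EE) : Fin 3 → ℝ), ((L b : EE) : Fin 3 → ℝ)] :=
    triple_product_eq_det _ _ _
  rw [e1, e2]
  rw [show (![((L c : EE) : Fin 3 → ℝ), ((L a : EE) : Fin 3 → ℝ), ((L b : EE) : Fin 3 → ℝ)] :
        Matrix (Fin 3) (Fin 3) ℝ) =
      ![matOf K *ᵥ (c : Fin 3 → ℝ), matOf K *ᵥ (a : Fin 3 → ℝ), matOf K *ᵥ (b : Fin 3 → ℝ)] by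
    rw [key, key, key]]
  rw [det_rows_mulVec]
  rw [show (matOf K).det = 1 by rw [matOf, LinearMap.det_toMatrix, hdet]]
  ring

lemma det_frameRows {N A C : EE} (h : ¬ Collinear ℝ ({N, A, C} : Set EE)) :
    Matrix.det ![(uT N A : Fin 3 → ℝ), (vT N A C : Fin 3 → ℝ), (wT N A C : Fin 3 → ℝ)] = 1 := by
  rw [← triple_product_eq_det, triple_product_permutation, triple_product_permutation]
  have e : crossProduct (uT N A : Fin 3 → ℝ) (vT N A C : Fin 3 → ℝ) = (wT N A C : Fin 3 → ℝ) := rfl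
  rw [e, ← inner_toDot]
  exact inner_wT_wT h

end cross

section mapf
variable (f : EE ≃ᵃⁱ[ℝ] EE)

lemma f_sub (x y : EE) : f x - f y = f.linearIsometryEquiv (x - y) := by
  rw [← vsub_eq_sub, ← vsub_eq_sub, AffineIsometryEquiv.map_vsub]

lemma map_uT (Np Ap : EE) : uT (f Np) (f Ap) = f.linearIsometryEquiv (uT Np Ap) := by
  rw [uT, uT, f_sub, LinearIsometryEquiv.norm_map, LinearIsometryEquiv.map_smul]

lemma map_bT (Np Ap Cp : EE) : bT (f Np) (f Ap) (f Cp) = bT Np Ap Cp := by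
  rw [bT, bT, f_sub, f_sub, LinearIsometryEquiv.inner_map_map, LinearIsometryEquiv.norm_map]

lemma map_hT (Np Ap Cp : EE) :
    hT (f Np) (f Ap) (f Cp) = f.linearIsometryEquiv (hT Np Ap Cp) := by
  rw [hT, hT, f_sub, f_sub, map_bT]
  conv_rhs => rw [_root_.map_sub, _root_.map_smul]

lemma map_vT (Np Ap Cp : EE) :
    vT (f Np) (f Ap) (f Cp) = f.linearIsometryEquiv (vT Np Ap Cp) := by
  rw [vT, vT, map_hT, LinearIsometryEquiv.norm_map, LinearIsometryEquiv.map_smul]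

lemma map_wT (hdet : LinearMap.det f.linearIsometryEquiv.toLinearEquiv.toLinearMap = 1)
    (Np Ap Cp : EE) :
    wT (f Np) (f Ap) (f Cp) = f.linearIsometryEquiv (wT Np Ap Cp) := by
  rw [wT, wT, map_uT, map_vT, map_cross3 f.linearIsometryEquiv hdet]

end mapf

section recon
variable {N A C N' A' C' : EE}

def LL (hS0 : ¬ Collinear ℝ ({N, A, C} : Set EE)) (hQ0 : ¬ Collinear ℝ ({N', A', C'} : Set EE)) :
    EE ≃ₗᵢ[ℝ] EE :=
  (frameOB hS0).repr.trans (frameOB hQ0).repr.symm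

lemma LL_frame (hS0 : ¬ Collinear ℝ ({N, A, C} : Set EE))
    (hQ0 : ¬ Collinear ℝ ({N', A', C'} : Set EE)) (k : Fin 3) :
    LL hS0 hQ0 (frameV N A C k) = frameV N' A' C' k := by
  have h1 : frameV N A C k = frameOB hS0 k := (frameOB_apply hS0 k).symm
  rw [LL, h1, LinearIsometryEquiv.trans_apply, OrthonormalBasis.repr_self,
    OrthonormalBasis.repr_symm_single, frameOB_apply]

lemma detLL (hS0 : ¬ Collinear ℝ ({N, A, C} : Set EE))
    (hQ0 : ¬ Collinear ℝ ({N', A', C'} : Set EE)) :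
    LinearMap.det (LL hS0 hQ0).toLinearEquiv.toLinearMap = 1 := by
  set K := (LL hS0 hQ0).toLinearEquiv.toLinearMap with hK
  have hKL : ∀ x : EE, K x = LL hS0 hQ0 x := fun _ => rfl
  set MS : Matrix (Fin 3) (Fin 3) ℝ :=
    Matrix.of (fun i k => (frameV N A C k : Fin 3 → ℝ) i) with hMS
  set MQ : Matrix (Fin 3) (Fin 3) ℝ :=
    Matrix.of (fun i k => (frameV N' A' C' k : Fin 3 → ℝ) i) with hMQ
  have hmul : matOf K * MS = MQ := by
    funext i k
    rw [Matrix.mul_apply]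
    have h2 := congrFun (matOf_mulVec K (frameV N A C k)) i
    rw [mulVec, dotProduct] at h2
    calc ∑ j, matOf K i j * MS j k = ∑ j, matOf K i j * (frameV N A C k : Fin 3 → ℝ) j := rfl
      _ = (K (frameV N A C k) : Fin 3 → ℝ) i := h2
      _ = (frameV N' A' C' k : Fin 3 → ℝ) i := by rw [hKL, LL_frame]
      _ = MQ i k := rfl
  have hdS : MS.det = 1 := by
    rw [← Matrix.det_transpose]
    have : MSᵀ = ![(uT N A : Fin 3 → ℝ), (vT N A C : Fin 3 → ℝ), (wT N A C : Fin 3 → ℝ)] := by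
      funext k i
      fin_cases k <;> rfl
    rw [this]
    exact det_frameRows hS0
  have hdQ : MQ.det = 1 := by
    rw [← Matrix.det_transpose]
    have : MQᵀ = ![(uT N' A' : Fin 3 → ℝ), (vT N' A' C' : Fin 3 → ℝ), (wT N' A' C' : Fin 3 → ℝ)] := by
      funext k i
      fin_cases k <;> rfl
    rw [this]
    exact det_frameRows hQ0
  have := congrArg Matrix.det hmul
  rw [Matrix.det_mul, hdS, hdQ, mul_one] at this
  rw [← this, matOf, LinearMap.det_toMatrix]

lemma recon_vec (hQp : ¬ Collinear ℝ ({N', A', C'} : Set EE)) (L : EE ≃ₗᵢ[ℝ] EE)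
    (hu : L (uT N A) = uT N' A') (hv : L (vT N A C) = vT N' A' C')
    (hw : L (wT N A C) = wT N' A' C') {d d' : EE}
    (e0 : ⟪d, uT N A⟫ = ⟪d', uT N' A'⟫)
    (e1 : ⟪d, vT N A C⟫ = ⟪d', vT N' A' C'⟫)
    (e2 : ⟪d, wT N A C⟫ = ⟪d', wT N' A' C'⟫) :
    L d = d' := by
  apply ext_frame hQp
  · rw [← hu, L.inner_map_map, e0, hu]
  · rw [← hv, L.inner_map_map, e1, hv]
  · rw [← hw, L.inner_map_map, e2, hw]

end recon


end

/-- **Theorem (completeness of BRI under rigid motion).**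
Two backbones `S = (N, A, C)` and `Q = (N', A', C')` of `m` residues are
related by a rigid motion (orientation-preserving isometry of `ℝ³`) if and
only if `BRI(S) = BRI(Q)`. -/
theorem BRI_complete_rigid
    (m : ℕ) (hm : 1 ≤ m) (N A C N' A' C' : Fin m → EuclideanSpace ℝ (Fin 3))
    (hS : IsBackbone N A C) (hQ : IsBackbone N' A' C') :
    (∃ f : EuclideanSpace ℝ (Fin 3) ≃ᵃⁱ[ℝ] EuclideanSpace ℝ (Fin 3),
        IsRigidMotion f ∧ N' = f ∘ N ∧ A' = f ∘ A ∧ C' = f ∘ C) ↔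
      BRI N A C = BRI N' A' C' := by
  constructor
  · rintro ⟨f, hrig, hN, hA, hC⟩
    subst hN; subst hA; subst hC
    have hdet : LinearMap.det f.linearIsometryEquiv.toLinearEquiv.toLinearMap = 1 := hrig
    have Hu : ∀ x y Np Ap : EE, ⟪f x - f y, uT (f Np) (f Ap)⟫ = ⟪x - y, uT Np Ap⟫ := by
      intro x y Np Ap
      rw [f_sub, map_uT, LinearIsometryEquiv.inner_map_map]
    have Hv : ∀ x y Np Ap Cp : EE,
        ⟪f x - f y, vT (f Np) (f Ap) (f Cp)⟫ = ⟪x - y, vT Np Ap Cp⟫ := by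
      intro x y Np Ap Cp
      rw [f_sub, map_vT, LinearIsometryEquiv.inner_map_map]
    have Hw : ∀ x y Np Ap Cp : EE,
        ⟪f x - f y, wT (f Np) (f Ap) (f Cp)⟫ = ⟪x - y, wT Np Ap Cp⟫ := by
      intro x y Np Ap Cp
      rw [f_sub, map_wT f hdet, LinearIsometryEquiv.inner_map_map]
    have Hn : ∀ x y : EE, ‖f x - f y‖ = ‖x - y‖ := by
      intro x y
      rw [f_sub, LinearIsometryEquiv.norm_map]
    have Hh : ∀ Np Ap Cp : EE, ‖hT (f Np) (f Ap) (f Cp)‖ = ‖hT Np Ap Cp‖ := by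
      intro Np Ap Cp
      rw [map_hT, LinearIsometryEquiv.norm_map]
    funext i j
    by_cases hi : (i : ℕ) = 0
    · simp only [BRI, hi, if_true, Function.comp_apply]
      rw [Hn (N i) (A i), Hu (C i) (A i) (N i) (A i), Hh (N i) (A i) (C i)]
    · simp only [BRI, hi, if_false, Function.comp_apply]
      rw [Hu (N i) _ (N _) (A _), Hu (A i) (N i) _ _, Hu (C i) (A i) _ _,
        Hv (N i) _ _ _ _, Hv (A i) (N i) _ _ _, Hv (C i) (A i) _ _ _,
        Hw (N i) _ _ _ _, Hw (A i) (N i) _ _ _, Hw (C i) (A i) _ _ _]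
  · intro hB
    have hS0 := hS ⟨0, hm⟩
    have hQ0 := hQ ⟨0, hm⟩
    set L := LL hS0 hQ0 with hL
    have hdetL := detLL hS0 hQ0
    set f : EE ≃ᵃⁱ[ℝ] EE :=
      L.toAffineIsometryEquiv.trans
        (AffineIsometryEquiv.constVAdd ℝ EE (A' ⟨0, hm⟩ -ᵥ L (A ⟨0, hm⟩))) with hf
    have hfx : ∀ x : EE, f x = A' ⟨0, hm⟩ - L (A ⟨0, hm⟩) + L x := by
      intro x
      simp [hf, vsub_eq_sub]
    have hflin : f.linearIsometryEquiv = L := by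
      refine LinearIsometryEquiv.ext fun x => ?_
      have h := AffineIsometryEquiv.map_vsub f x 0
      rw [vsub_eq_sub, sub_zero, vsub_eq_sub, hfx, hfx, map_zero, add_zero] at h
      rw [h]
      abel
    have hrig : IsRigidMotion f := by rw [IsRigidMotion, hflin]; exact hdetL
    have hent : ∀ (i : Fin m) (j : Fin 9), BRI N A C i j = BRI N' A' C' i j :=
      fun i j => congrFun (congrFun hB i) j
    have E0 : ‖N ⟨0, hm⟩ - A ⟨0, hm⟩‖ = ‖N' ⟨0, hm⟩ - A' ⟨0, hm⟩‖ := hent ⟨0, hm⟩ 0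
    have E1 : ⟪C ⟨0, hm⟩ - A ⟨0, hm⟩, uT (N ⟨0, hm⟩) (A ⟨0, hm⟩)⟫ =
        ⟪C' ⟨0, hm⟩ - A' ⟨0, hm⟩, uT (N' ⟨0, hm⟩) (A' ⟨0, hm⟩)⟫ := hent ⟨0, hm⟩ 1
    have E2 : ‖hT (N ⟨0, hm⟩) (A ⟨0, hm⟩) (C ⟨0, hm⟩)‖ =
        ‖hT (N' ⟨0, hm⟩) (A' ⟨0, hm⟩) (C' ⟨0, hm⟩)‖ := hent ⟨0, hm⟩ 2
    have key : ∀ n (hn : n < m), f (N ⟨n, hn⟩) = N' ⟨n, hn⟩ ∧ f (A ⟨n, hn⟩) = A' ⟨n, hn⟩ ∧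
        f (C ⟨n, hn⟩) = C' ⟨n, hn⟩ := by
      intro n
      induction n with
      | zero =>
        intro hn
        have hu : L (uT (N ⟨0, hm⟩) (A ⟨0, hm⟩)) = uT (N' ⟨0, hm⟩) (A' ⟨0, hm⟩) :=
          LL_frame hS0 hQ0 0
        have hv : L (vT (N ⟨0, hm⟩) (A ⟨0, hm⟩) (C ⟨0, hm⟩)) =
            vT (N' ⟨0, hm⟩) (A' ⟨0, hm⟩) (C' ⟨0, hm⟩) := LL_frame hS0 hQ0 1
        have hw : L (wT (N ⟨0, hm⟩) (A ⟨0, hm⟩) (C ⟨0, hm⟩)) =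
            wT (N' ⟨0, hm⟩) (A' ⟨0, hm⟩) (C' ⟨0, hm⟩) := LL_frame hS0 hQ0 2
        have fA : f (A ⟨0, hm⟩) = A' ⟨0, hm⟩ := by
          rw [hfx, sub_add_cancel]
        have fN : f (N ⟨0, hm⟩) = N' ⟨0, hm⟩ := by
          have hd : L (N ⟨0, hm⟩ - A ⟨0, hm⟩) = N' ⟨0, hm⟩ - A' ⟨0, hm⟩ := by
            rw [NA_eq_smul_uT (N := N ⟨0, hm⟩) (A := A ⟨0, hm⟩),
              LinearIsometryEquiv.map_smul, hu, E0, ← NA_eq_smul_uT]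
          have h := f_sub f (N ⟨0, hm⟩) (A ⟨0, hm⟩)
          rw [hflin, hd, fA] at h
          exact sub_left_inj.mp h
        have fC : f (C ⟨0, hm⟩) = C' ⟨0, hm⟩ := by
          have hd : L (C ⟨0, hm⟩ - A ⟨0, hm⟩) = C' ⟨0, hm⟩ - A' ⟨0, hm⟩ := by
            refine recon_vec hQ0 L hu hv hw E1 ?_ ?_
            · rw [inner_CA_vT hS0, inner_CA_vT hQ0]
              exact E2
            · rw [inner_CA_wT hS0, inner_CA_wT hQ0]
          have h := f_sub f (C ⟨0, hm⟩) (A ⟨0, hm⟩)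
          rw [hflin, hd, fA] at h
          exact sub_left_inj.mp h
        exact ⟨fN, fA, fC⟩
      | succ n ih =>
        intro hn
        have hn' : n < m := Nat.lt_of_succ_lt hn
        obtain ⟨pN, pA, pC⟩ := ih hn'
        have hSp := hS ⟨n, hn'⟩
        have hQp := hQ ⟨n, hn'⟩
        have hu : L (uT (N ⟨n, hn'⟩) (A ⟨n, hn'⟩)) = uT (N' ⟨n, hn'⟩) (A' ⟨n, hn'⟩) := by
          rw [← pN, ← pA, map_uT, hflin]
        have hv : L (vT (N ⟨n, hn'⟩) (A ⟨n, hn'⟩) (C ⟨n, hn'⟩)) =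
            vT (N' ⟨n, hn'⟩) (A' ⟨n, hn'⟩) (C' ⟨n, hn'⟩) := by
          rw [← pN, ← pA, ← pC, map_vT, hflin]
        have hw : L (wT (N ⟨n, hn'⟩) (A ⟨n, hn'⟩) (C ⟨n, hn'⟩)) =
            wT (N' ⟨n, hn'⟩) (A' ⟨n, hn'⟩) (C' ⟨n, hn'⟩) := by
          rw [← pN, ← pA, ← pC, map_wT f hrig, hflin]
        have F0 : ⟪N ⟨n + 1, hn⟩ - C ⟨n, hn'⟩, uT (N ⟨n, hn'⟩) (A ⟨n, hn'⟩)⟫ =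
            ⟪N' ⟨n + 1, hn⟩ - C' ⟨n, hn'⟩, uT (N' ⟨n, hn'⟩) (A' ⟨n, hn'⟩)⟫ := hent ⟨n + 1, hn⟩ 0
        have F1 : ⟪N ⟨n + 1, hn⟩ - C ⟨n, hn'⟩, vT (N ⟨n, hn'⟩) (A ⟨n, hn'⟩) (C ⟨n, hn'⟩)⟫ =
            ⟪N' ⟨n + 1, hn⟩ - C' ⟨n, hn'⟩, vT (N' ⟨n, hn'⟩) (A' ⟨n, hn'⟩) (C' ⟨n, hn'⟩)⟫ :=
          hent ⟨n + 1, hn⟩ 1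
        have F2 : ⟪N ⟨n + 1, hn⟩ - C ⟨n, hn'⟩, wT (N ⟨n, hn'⟩) (A ⟨n, hn'⟩) (C ⟨n, hn'⟩)⟫ =
            ⟪N' ⟨n + 1, hn⟩ - C' ⟨n, hn'⟩, wT (N' ⟨n, hn'⟩) (A' ⟨n, hn'⟩) (C' ⟨n, hn'⟩)⟫ :=
          hent ⟨n + 1, hn⟩ 2
        have F3 : ⟪A ⟨n + 1, hn⟩ - N ⟨n + 1, hn⟩, uT (N ⟨n, hn'⟩) (A ⟨n, hn'⟩)⟫ =
            ⟪A' ⟨n + 1, hn⟩ - N' ⟨n + 1, hn⟩, uT (N' ⟨n, hn'⟩) (A' ⟨n, hn'⟩)⟫ := hent ⟨n + 1, hn⟩ 3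
        have F4 : ⟪A ⟨n + 1, hn⟩ - N ⟨n + 1, hn⟩, vT (N ⟨n, hn'⟩) (A ⟨n, hn'⟩) (C ⟨n, hn'⟩)⟫ =
            ⟪A' ⟨n + 1, hn⟩ - N' ⟨n + 1, hn⟩, vT (N' ⟨n, hn'⟩) (A' ⟨n, hn'⟩) (C' ⟨n, hn'⟩)⟫ :=
          hent ⟨n + 1, hn⟩ 4
        have F5 : ⟪A ⟨n + 1, hn⟩ - N ⟨n + 1, hn⟩, wT (N ⟨n, hn'⟩) (A ⟨n, hn'⟩) (C ⟨n, hn'⟩)⟫ =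
            ⟪A' ⟨n + 1, hn⟩ - N' ⟨n + 1, hn⟩, wT (N' ⟨n, hn'⟩) (A' ⟨n, hn'⟩) (C' ⟨n, hn'⟩)⟫ :=
          hent ⟨n + 1, hn⟩ 5
        have F6 : ⟪C ⟨n + 1, hn⟩ - A ⟨n + 1, hn⟩, uT (N ⟨n, hn'⟩) (A ⟨n, hn'⟩)⟫ =
            ⟪C' ⟨n + 1, hn⟩ - A' ⟨n + 1, hn⟩, uT (N' ⟨n, hn'⟩) (A' ⟨n, hn'⟩)⟫ := hent ⟨n + 1, hn⟩ 6
        have F7 : ⟪C ⟨n + 1, hn⟩ - A ⟨n + 1, hn⟩, vT (N ⟨n, hn'⟩) (A ⟨n, hn'⟩) (C ⟨n, hn'⟩)⟫ =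
            ⟪C' ⟨n + 1, hn⟩ - A' ⟨n + 1, hn⟩, vT (N' ⟨n, hn'⟩) (A' ⟨n, hn'⟩) (C' ⟨n, hn'⟩)⟫ :=
          hent ⟨n + 1, hn⟩ 7
        have F8 : ⟪C ⟨n + 1, hn⟩ - A ⟨n + 1, hn⟩, wT (N ⟨n, hn'⟩) (A ⟨n, hn'⟩) (C ⟨n, hn'⟩)⟫ =
            ⟪C' ⟨n + 1, hn⟩ - A' ⟨n + 1, hn⟩, wT (N' ⟨n, hn'⟩) (A' ⟨n, hn'⟩) (C' ⟨n, hn'⟩)⟫ :=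
          hent ⟨n + 1, hn⟩ 8
        have fN : f (N ⟨n + 1, hn⟩) = N' ⟨n + 1, hn⟩ := by
          have hd := recon_vec hQp L hu hv hw F0 F1 F2
          have h := f_sub f (N ⟨n + 1, hn⟩) (C ⟨n, hn'⟩)
          rw [hflin, hd, pC] at h
          exact sub_left_inj.mp h
        have fA : f (A ⟨n + 1, hn⟩) = A' ⟨n + 1, hn⟩ := by
          have hd := recon_vec hQp L hu hv hw F3 F4 F5
          have h := f_sub f (A ⟨n + 1, hn⟩) (N ⟨n + 1, hn⟩)
          rw [hflin, hd, fN] at h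
          exact sub_left_inj.mp h
        have fC : f (C ⟨n + 1, hn⟩) = C' ⟨n + 1, hn⟩ := by
          have hd := recon_vec hQp L hu hv hw F6 F7 F8
          have h := f_sub f (C ⟨n + 1, hn⟩) (A ⟨n + 1, hn⟩)
          rw [hflin, hd, fA] at h
          exact sub_left_inj.mp h
        exact ⟨fN, fA, fC⟩
    refine ⟨f, hrig, ?_, ?_, ?_⟩
    · funext i
      exact ((key i.1 i.2).1).symm
    · funext i
      exact ((key i.1 i.2).2.1).symm
    · funext i
      exact ((key i.1 i.2).2.2).symm
end

section
/- Let S be a backbone of m residues with maps N, A, C and let g be an orientation-reversing isometry of EuclideanSpace ℝ (Fin 3) (its linear part has determinant -1). Let S̄ be the mirror backbone with maps g ∘ N, g ∘ A, g ∘ C. Then BRI(S̄) is obtained from BRI(S) by reversing the signs of the three w-coordinate columns (columns 3, 6, 9 in 1-based numbering, i.e. the inner products with w (i-1)) in every row i ≥ 1, while row 0 is unchanged. -/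
open scoped RealInnerProductSpace

section Aux

open Matrix

private lemma cross3_isometry
    (L : EuclideanSpace ℝ (Fin 3) ≃ₗᵢ[ℝ] EuclideanSpace ℝ (Fin 3))
    (hdet : LinearMap.det L.toLinearEquiv.toLinearMap = -1)
    (u v : EuclideanSpace ℝ (Fin 3)) :
    cross3 (L u) (L v) = - L (cross3 u v) := by
  classical
  set b := (EuclideanSpace.basisFun (Fin 3) ℝ).toBasis with hb
  set M : Matrix (Fin 3) (Fin 3) ℝ :=
    LinearMap.toMatrix b b L.toLinearEquiv.toLinearMap with hMdef
  have hdetM : M.det = -1 := by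
    rw [hMdef, LinearMap.det_toMatrix]; exact hdet
  have hM : ∀ x : EuclideanSpace ℝ (Fin 3),
      (EuclideanSpace.equiv (Fin 3) ℝ) (L x) =
        M.mulVec ((EuclideanSpace.equiv (Fin 3) ℝ) x) := by
    intro x
    have h := LinearMap.toMatrix_mulVec_repr b b L.toLinearEquiv.toLinearMap x
    funext i
    exact (congrFun h i).symm
  have hdot : ∀ x y : EuclideanSpace ℝ (Fin 3),
      (M.mulVec ((EuclideanSpace.equiv (Fin 3) ℝ) x)) ⬝ᵥ
        (M.mulVec ((EuclideanSpace.equiv (Fin 3) ℝ) y)) =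
      ((EuclideanSpace.equiv (Fin 3) ℝ) x) ⬝ᵥ ((EuclideanSpace.equiv (Fin 3) ℝ) y) := by
    intro x y
    rw [← hM, ← hM]
    have h1 : ⟪L x, L y⟫ = ⟪x, y⟫ := L.inner_map_map x y
    rw [PiLp.inner_apply, PiLp.inner_apply] at h1
    simpa [dotProduct, RCLike.inner_apply, starRingEnd_apply, mul_comm] using h1
  have key : ∀ x : Fin 3 → ℝ, ∃ y : Fin 3 → ℝ, M.mulVec y = x := by
    intro x
    refine ⟨(EuclideanSpace.equiv (Fin 3) ℝ) (L.symm ((EuclideanSpace.equiv (Fin 3) ℝ).symm x)), ?_⟩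
    rw [← hM]
    simp; rfl
  have crossM : ∀ a c : Fin 3 → ℝ,
      crossProduct (M.mulVec a) (M.mulVec c) = M.det • M.mulVec (crossProduct a c) := by
    intro a c
    have h : ∀ x : Fin 3 → ℝ,
        x ⬝ᵥ crossProduct (M.mulVec a) (M.mulVec c) =
        x ⬝ᵥ (M.det • M.mulVec (crossProduct a c)) := by
      intro x
      obtain ⟨y, rfl⟩ := key x
      rw [triple_product_eq_det]
      have hmat : (![M.mulVec y, M.mulVec a, M.mulVec c] : Matrix (Fin 3) (Fin 3) ℝ)
          = Matrix.of ![y, a, c] * Mᵀ := by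
        ext i j
        fin_cases i <;>
          simp [Matrix.mul_apply, Matrix.mulVec, dotProduct, mul_comm]
      rw [hmat, Matrix.det_mul, Matrix.det_transpose]
      have hdet3 : (Matrix.of ![y, a, c] : Matrix (Fin 3) (Fin 3) ℝ).det =
          y ⬝ᵥ (crossProduct a c) := (triple_product_eq_det y a c).symm
      rw [hdet3]
      have h2 : (M.mulVec y) ⬝ᵥ (M.det • M.mulVec (crossProduct a c)) =
          M.det * ((M.mulVec y) ⬝ᵥ (M.mulVec (crossProduct a c))) := by
        simp [dotProduct, Finset.mul_sum, mul_assoc, mul_left_comm]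
      rw [h2]
      have h3 : (M.mulVec y) ⬝ᵥ (M.mulVec (crossProduct a c)) =
          y ⬝ᵥ (crossProduct a c) := by
        have := hdot ((EuclideanSpace.equiv (Fin 3) ℝ).symm y)
          ((EuclideanSpace.equiv (Fin 3) ℝ).symm (crossProduct a c))
        exact this
      rw [h3]; ring
    funext i
    have := h (Pi.single i 1)
    simpa [dotProduct, Pi.single_apply, Finset.sum_ite_eq] using this
  have hfin : crossProduct ((EuclideanSpace.equiv (Fin 3) ℝ) (L u))
      ((EuclideanSpace.equiv (Fin 3) ℝ) (L v)) =
      (-1 : ℝ) • M.mulVec (crossProduct ((EuclideanSpace.equiv (Fin 3) ℝ) u)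
        ((EuclideanSpace.equiv (Fin 3) ℝ) v)) := by
    rw [hM, hM, crossM, hdetM]
  unfold cross3
  rw [hfin]
  have h4 : M.mulVec (crossProduct ((EuclideanSpace.equiv (Fin 3) ℝ) u)
      ((EuclideanSpace.equiv (Fin 3) ℝ) v)) =
      (EuclideanSpace.equiv (Fin 3) ℝ) (L ((EuclideanSpace.equiv (Fin 3) ℝ).symm
        (crossProduct ((EuclideanSpace.equiv (Fin 3) ℝ) u)
          ((EuclideanSpace.equiv (Fin 3) ℝ) v)))) := by
    rw [hM]; simp; rfl
  rw [h4]
  simp [neg_one_smul]; rfl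

section Transform

variable (g : EuclideanSpace ℝ (Fin 3) ≃ᵃⁱ[ℝ] EuclideanSpace ℝ (Fin 3))

private lemma g_sub (x y : EuclideanSpace ℝ (Fin 3)) :
    g x - g y = g.linearIsometryEquiv (x - y) := by
  have := g.map_vsub x y
  simpa [vsub_eq_sub] using this.symm

private lemma uT_map (x y : EuclideanSpace ℝ (Fin 3)) :
    uT (g x) (g y) = g.linearIsometryEquiv (uT x y) := by
  rw [uT, uT, g_sub g, LinearIsometryEquiv.norm_map, _root_.map_smul]

private lemma bT_map (x y z : EuclideanSpace ℝ (Fin 3)) :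
    bT (g x) (g y) (g z) = bT x y z := by
  rw [bT, bT, g_sub g, g_sub g, LinearIsometryEquiv.inner_map_map,
    LinearIsometryEquiv.norm_map]

private lemma hT_map (x y z : EuclideanSpace ℝ (Fin 3)) :
    hT (g x) (g y) (g z) = g.linearIsometryEquiv (hT x y z) := by
  simp only [hT, g_sub g, bT_map g, map_sub, _root_.map_smul]

private lemma vT_map (x y z : EuclideanSpace ℝ (Fin 3)) :
    vT (g x) (g y) (g z) = g.linearIsometryEquiv (vT x y z) := by
  rw [vT, vT, hT_map g, LinearIsometryEquiv.norm_map, _root_.map_smul]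

private lemma wT_map
    (hg : LinearMap.det g.linearIsometryEquiv.toLinearEquiv.toLinearMap = -1)
    (x y z : EuclideanSpace ℝ (Fin 3)) :
    wT (g x) (g y) (g z) = - g.linearIsometryEquiv (wT x y z) := by
  rw [wT, uT_map, vT_map, cross3_isometry g.linearIsometryEquiv hg, wT]

private lemma consval5 (a₀ a₁ a₂ a₃ a₄ a₅ a₆ a₇ a₈ : ℝ) :
    (![a₀,a₁,a₂,a₃,a₄,a₅,a₆,a₇,a₈] : Fin 9 → ℝ) 5 = a₅ := rfl
private lemma consval6 (a₀ a₁ a₂ a₃ a₄ a₅ a₆ a₇ a₈ : ℝ) :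
    (![a₀,a₁,a₂,a₃,a₄,a₅,a₆,a₇,a₈] : Fin 9 → ℝ) 6 = a₆ := rfl
private lemma consval7 (a₀ a₁ a₂ a₃ a₄ a₅ a₆ a₇ a₈ : ℝ) :
    (![a₀,a₁,a₂,a₃,a₄,a₅,a₆,a₇,a₈] : Fin 9 → ℝ) 7 = a₇ := rfl
private lemma consval8 (a₀ a₁ a₂ a₃ a₄ a₅ a₆ a₇ a₈ : ℝ) :
    (![a₀,a₁,a₂,a₃,a₄,a₅,a₆,a₇,a₈] : Fin 9 → ℝ) 8 = a₈ := rfl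

end Transform

end Aux

/-- **Theorem (BRI of a mirror image).**
If `g` is an orientation-reversing isometry of `ℝ³` (linear part of
determinant `-1`) and `S̄ = (g ∘ N, g ∘ A, g ∘ C)` is the mirror image of the
backbone `S = (N, A, C)`, then `BRI(S̄)` is obtained from `BRI(S)` by reversing
the signs of the three `w`-coordinate columns (columns `2, 5, 8`, i.e. those
with column index `≡ 2 (mod 3)`) in every row `i ≥ 1`, and row `0` is
unchanged. -/
theorem BRI_mirror
    (m : ℕ) (hm : 1 ≤ m) (N A C : Fin m → EuclideanSpace ℝ (Fin 3))
    (hS : IsBackbone N A C)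
    (g : EuclideanSpace ℝ (Fin 3) ≃ᵃⁱ[ℝ] EuclideanSpace ℝ (Fin 3))
    (hg : LinearMap.det g.linearIsometryEquiv.toLinearEquiv.toLinearMap = -1) :
    ∀ (i : Fin m) (j : Fin 9),
      BRI (g ∘ N) (g ∘ A) (g ∘ C) i j =
        (if 1 ≤ (i : ℕ) ∧ (j : ℕ) % 3 = 2 then -1 else 1) * BRI N A C i j := by
  intro i j
  have hsub : ∀ x y : EuclideanSpace ℝ (Fin 3),
      g x - g y = g.linearIsometryEquiv (x - y) := g_sub g
  by_cases hi : (i : ℕ) = 0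
  · have hcond : ¬ (1 ≤ (i : ℕ) ∧ (j : ℕ) % 3 = 2) := by
      rintro ⟨h1, -⟩; omega
    rw [if_neg hcond, one_mul]
    have e1 : ‖g (N i) - g (A i)‖ = ‖N i - A i‖ := by
      rw [hsub]; exact g.linearIsometryEquiv.norm_map _
    have e2 : ⟪g (C i) - g (A i), uT (g (N i)) (g (A i))⟫ =
        ⟪C i - A i, uT (N i) (A i)⟫ := by
      rw [hsub, uT_map]; exact g.linearIsometryEquiv.inner_map_map _ _
    have e3 : ‖hT (g (N i)) (g (A i)) (g (C i))‖ = ‖hT (N i) (A i) (C i)‖ := by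
      rw [hT_map]; exact g.linearIsometryEquiv.norm_map _
    simp only [BRI, hi, if_pos, Function.comp_apply]
    fin_cases j <;> simp [e1, e2, e3]
  · have hcond : 1 ≤ (i : ℕ) := Nat.one_le_iff_ne_zero.mpr hi
    set p : Fin m := ⟨(i : ℕ) - 1, lt_of_le_of_lt (Nat.sub_le _ _) i.isLt⟩ with hp
    have eu : ∀ x y : EuclideanSpace ℝ (Fin 3),
        ⟪g x - g y, uT (g (N p)) (g (A p))⟫ = ⟪x - y, uT (N p) (A p)⟫ := by
      intro x y; rw [hsub, uT_map]; exact g.linearIsometryEquiv.inner_map_map _ _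
    have ev : ∀ x y : EuclideanSpace ℝ (Fin 3),
        ⟪g x - g y, vT (g (N p)) (g (A p)) (g (C p))⟫ =
          ⟪x - y, vT (N p) (A p) (C p)⟫ := by
      intro x y; rw [hsub, vT_map]; exact g.linearIsometryEquiv.inner_map_map _ _
    have ew : ∀ x y : EuclideanSpace ℝ (Fin 3),
        ⟪g x - g y, wT (g (N p)) (g (A p)) (g (C p))⟫ =
          -⟪x - y, wT (N p) (A p) (C p)⟫ := by
      intro x y
      rw [hsub, wT_map g hg, inner_neg_right]
      exact neg_inj.mpr (g.linearIsometryEquiv.inner_map_map _ _)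
    simp only [BRI, hi, if_neg, Function.comp_apply, ← hp]
    fin_cases j <;>
      simp [hcond, eu, ev, ew, consval5, consval6, consval7, consval8]
end

section
/- Let S and Q be backbones of m residues with maps N, A, C and N', A', C' respectively, and let ε > 0 satisfy ‖N' i - N i‖ ≤ ε, ‖A' i - A i‖ ≤ ε, ‖C' i - C i‖ ≤ ε for all i. Suppose l_{N,A} > 0 is a lower bound for ‖N i - A i‖ in both backbones, L_{A,C} is an upper bound for ‖C i - A i‖ in both backbones, L is an upper bound for all bond lengths ‖N i - A i‖, ‖C i - A i‖, ‖N (i+1) - C i‖ in both backbones, and h > 0 is a lower bound for ‖h i‖ (the height of the residual triangle at C i) in both backbones. Set K = 1/l_{N,A} + (2/h)·(1 + 2·L_{A,C}/l_{N,A}) and λ = 2·(1 + 2·L·K). Then L∞(BRI(S), BRI(Q)) ≤ λ·ε. -/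
open scoped RealInnerProductSpace

section auxlemmas
variable {E : Type*} [NormedAddCommGroup E] [InnerProductSpace ℝ E]

lemma normalize_lip (x y : E) (lb : ℝ) (hlb : 0 < lb) (hx : lb ≤ ‖x‖) (hy : lb ≤ ‖y‖) :
    ‖‖x‖⁻¹ • x - ‖y‖⁻¹ • y‖ ≤ 2 / lb * ‖x - y‖ := by
  have hx0 : (0:ℝ) < ‖x‖ := lt_of_lt_of_le hlb hx
  have hy0 : (0:ℝ) < ‖y‖ := lt_of_lt_of_le hlb hy
  have hid : ‖x‖⁻¹ • x - ‖y‖⁻¹ • y = ‖x‖⁻¹ • (x - y) + (‖x‖⁻¹ - ‖y‖⁻¹) • y := by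
    rw [smul_sub, sub_smul]; abel
  rw [hid]
  have h1 : ‖‖x‖⁻¹ • (x - y)‖ = ‖x‖⁻¹ * ‖x - y‖ := by
    rw [norm_smul, Real.norm_eq_abs, abs_inv, abs_of_pos hx0]
  have h2 : ‖(‖x‖⁻¹ - ‖y‖⁻¹) • y‖ = |‖x‖⁻¹ - ‖y‖⁻¹| * ‖y‖ := by
    rw [norm_smul, Real.norm_eq_abs]
  have h3 : |‖x‖⁻¹ - ‖y‖⁻¹| * ‖y‖ ≤ ‖x‖⁻¹ * ‖x - y‖ := by
    have : ‖x‖⁻¹ - ‖y‖⁻¹ = (‖y‖ - ‖x‖) / (‖x‖ * ‖y‖) := by field_simp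
    rw [this, abs_div, abs_of_pos (mul_pos hx0 hy0)]
    have hny : |‖y‖ - ‖x‖| ≤ ‖x - y‖ := by
      rw [abs_sub_comm]; exact abs_norm_sub_norm_le x y
    rw [div_mul_eq_mul_div, div_le_iff₀ (mul_pos hx0 hy0)]
    calc |‖y‖ - ‖x‖| * ‖y‖ ≤ ‖x - y‖ * ‖y‖ := by gcongr
    _ = ‖x‖⁻¹ * ‖x - y‖ * (‖x‖ * ‖y‖) := by field_simp
  have h4 : ‖x‖⁻¹ * ‖x - y‖ ≤ 1 / lb * ‖x - y‖ := by
    rw [one_div]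
    exact mul_le_mul_of_nonneg_right (inv_anti₀ hlb hx) (norm_nonneg _)
  calc ‖‖x‖⁻¹ • (x - y) + (‖x‖⁻¹ - ‖y‖⁻¹) • y‖
      ≤ ‖‖x‖⁻¹ • (x - y)‖ + ‖(‖x‖⁻¹ - ‖y‖⁻¹) • y‖ := norm_add_le _ _
    _ ≤ ‖x‖⁻¹ * ‖x - y‖ + ‖x‖⁻¹ * ‖x - y‖ := by rw [h1, h2]; linarith
    _ ≤ 1/lb * ‖x - y‖ + 1/lb * ‖x - y‖ := by linarith
    _ = 2 / lb * ‖x - y‖ := by ring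

lemma norm_normalize (x : E) (h : ‖x‖ ≠ 0) : ‖‖x‖⁻¹ • x‖ = 1 := by
  rw [norm_smul, Real.norm_eq_abs, abs_inv, abs_of_nonneg (norm_nonneg _)]
  field_simp

lemma inner_sub_abs (d d' e e' : E) :
    |⟪d, e⟫ - ⟪d', e'⟫| ≤ ‖d - d'‖ * ‖e‖ + ‖d'‖ * ‖e - e'‖ := by
  have hid : ⟪d, e⟫ - ⟪d', e'⟫ = ⟪d - d', e⟫ + ⟪d', e - e'⟫ := by
    rw [inner_sub_left, inner_sub_right]; ring
  rw [hid]
  exact (abs_add_le _ _).trans (add_le_add (abs_real_inner_le_norm _ _) (abs_real_inner_le_norm _ _))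

lemma proj_diff (x x' u u' : E) (hu : ‖u‖ = 1) (hu' : ‖u'‖ = 1) (t s LAC : ℝ)
    (hxx : ‖x - x'‖ ≤ t) (hx' : ‖x'‖ ≤ LAC) (huu : ‖u - u'‖ ≤ s) (hs : 0 ≤ s) :
    ‖(x - ⟪x, u⟫ • u) - (x' - ⟪x', u'⟫ • u')‖ ≤ 2 * t + 2 * LAC * s := by
  have hid : (x - ⟪x, u⟫ • u) - (x' - ⟪x', u'⟫ • u')
      = (x - x') - (⟪x, u⟫ - ⟪x', u'⟫) • u - ⟪x', u'⟫ • (u - u') := by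
    rw [sub_smul, smul_sub]; abel
  rw [hid]
  have hLAC0 : (0:ℝ) ≤ LAC := le_trans (norm_nonneg _) hx'
  have hin : |⟪x, u⟫ - ⟪x', u'⟫| ≤ t + LAC * s := by
    refine le_trans (inner_sub_abs x x' u u') ?_
    rw [hu]
    have : ‖x - x'‖ * 1 ≤ t := by rw [mul_one]; exact hxx
    have h2 : ‖x'‖ * ‖u - u'‖ ≤ LAC * s :=
      mul_le_mul hx' huu (norm_nonneg _) hLAC0
    linarith
  have hb1 : ‖(⟪x, u⟫ - ⟪x', u'⟫) • u‖ ≤ t + LAC * s := by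
    rw [norm_smul, Real.norm_eq_abs, hu, mul_one]; exact hin
  have hb2 : ‖⟪x', u'⟫ • (u - u')‖ ≤ LAC * s := by
    rw [norm_smul, Real.norm_eq_abs]
    have h1 : |⟪x', u'⟫| ≤ LAC := by
      refine le_trans (abs_real_inner_le_norm _ _) ?_
      rw [hu', mul_one]; exact hx'
    exact mul_le_mul h1 huu (norm_nonneg _) hLAC0
  calc ‖(x - x') - (⟪x, u⟫ - ⟪x', u'⟫) • u - ⟪x', u'⟫ • (u - u')‖
      ≤ ‖(x - x') - (⟪x, u⟫ - ⟪x', u'⟫) • u‖ + ‖⟪x', u'⟫ • (u - u')‖ := norm_sub_le _ _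
    _ ≤ (‖x - x'‖ + ‖(⟪x, u⟫ - ⟪x', u'⟫) • u‖) + ‖⟪x', u'⟫ • (u - u')‖ := by
        have := norm_sub_le (x - x') ((⟪x, u⟫ - ⟪x', u'⟫) • u); linarith
    _ ≤ (t + (t + LAC * s)) + LAC * s := by linarith
    _ = 2 * t + 2 * LAC * s := by ring
end auxlemmas

section cross
lemma cross3_apply (u v : EuclideanSpace ℝ (Fin 3)) (i : Fin 3) :
    cross3 u v i = ![u 1 * v 2 - u 2 * v 1, u 2 * v 0 - u 0 * v 2, u 0 * v 1 - u 1 * v 0] i := by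
  simp [cross3, cross_apply, EuclideanSpace.equiv]

lemma norm_sq_eq3 (x : EuclideanSpace ℝ (Fin 3)) :
    ‖x‖ ^ 2 = x 0 ^ 2 + x 1 ^ 2 + x 2 ^ 2 := by
  rw [← real_inner_self_eq_norm_sq, PiLp.inner_apply]
  simp [Fin.sum_univ_three]

lemma inner_eq3 (x y : EuclideanSpace ℝ (Fin 3)) :
    ⟪x, y⟫ = x 0 * y 0 + x 1 * y 1 + x 2 * y 2 := by
  simp [PiLp.inner_apply, Fin.sum_univ_three]; ring

lemma norm_cross3_le (u v : EuclideanSpace ℝ (Fin 3)) : ‖cross3 u v‖ ≤ ‖u‖ * ‖v‖ := by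
  have lag : ‖cross3 u v‖ ^ 2 + ⟪u, v⟫ ^ 2 = ‖u‖ ^ 2 * ‖v‖ ^ 2 := by
    rw [norm_sq_eq3, norm_sq_eq3, norm_sq_eq3, inner_eq3, cross3_apply, cross3_apply, cross3_apply]
    simp [Matrix.cons_val_zero, Matrix.cons_val_one]
    ring
  nlinarith [norm_nonneg (cross3 u v), norm_nonneg u, norm_nonneg v, sq_nonneg (⟪u,v⟫ : ℝ),
    mul_nonneg (norm_nonneg u) (norm_nonneg v)]

lemma cross3_sub_sub (a b c d : EuclideanSpace ℝ (Fin 3)) :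
    cross3 a c - cross3 b d = cross3 (a - b) c + cross3 b (c - d) := by
  ext i
  have h1 := cross3_apply a c i
  have h2 := cross3_apply b d i
  have h3 := cross3_apply (a-b) c i
  have h4 := cross3_apply b (c-d) i
  fin_cases i <;>
    simp only [PiLp.sub_apply, PiLp.add_apply] at * <;>
    rw [h1, h2, h3, h4] <;> simp <;> ring
end cross

section hTlemmas
lemma proj_eq (N A C : EuclideanSpace ℝ (Fin 3)) (h : ‖N - A‖ ≠ 0) :
    ⟪C - A, uT N A⟫ • uT N A = bT N A C • (N - A) := by
  rw [uT, real_inner_smul_right, smul_smul, bT]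
  congr 1
  set t := ⟪C - A, N - A⟫ with ht
  field_simp

lemma hT_eq (N A C : EuclideanSpace ℝ (Fin 3)) (h : ‖N - A‖ ≠ 0) :
    hT N A C = (C - A) - ⟪C - A, uT N A⟫ • uT N A := by
  rw [hT, proj_eq N A C h]

lemma norm_uT_s4 (N A : EuclideanSpace ℝ (Fin 3)) (h : ‖N - A‖ ≠ 0) : ‖uT N A‖ = 1 :=
  norm_normalize _ h

lemma norm_hT_le (N A C : EuclideanSpace ℝ (Fin 3)) (h : ‖N - A‖ ≠ 0) :
    ‖hT N A C‖ ≤ ‖C - A‖ := by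
  have hdecomp : C - A = hT N A C + bT N A C • (N - A) := by rw [hT]; abel
  have horth : ⟪hT N A C, bT N A C • (N - A)⟫ = 0 := by
    rw [real_inner_smul_right, hT, inner_sub_left, real_inner_smul_left, bT,
      real_inner_self_eq_norm_sq]
    field_simp
    ring
  have h2 : ‖C - A‖^2 = ‖hT N A C‖^2 + 2*⟪hT N A C, bT N A C • (N - A)⟫ + ‖bT N A C • (N - A)‖^2 := by
    rw [hdecomp]; rw [← norm_add_sq_real]
  rw [horth] at h2
  nlinarith [norm_nonneg (hT N A C), norm_nonneg (bT N A C • (N - A)), norm_nonneg (C - A)]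
end hTlemmas


set_option maxHeartbeats 2000000 in
/-- **Theorem (Lipschitz continuity of BRI).**
If `Q = (N', A', C')` is obtained from the backbone `S = (N, A, C)` by
perturbing every atom by at most `ε`, and `l_{N,A} > 0`, `L_{A,C}`, `L`,
`h₀ > 0` bound the bond lengths and triangle heights of both backbones as
stated, then with `K = 1/l_{N,A} + (2/h₀)·(1 + 2·L_{A,C}/l_{N,A})` and
`λ = 2·(1 + 2·L·K)` we have `L∞(BRI(S), BRI(Q)) ≤ λ·ε`. -/
theorem BRI_lipschitz
    (m : ℕ) (hm : 1 ≤ m) (N A C N' A' C' : Fin m → EuclideanSpace ℝ (Fin 3))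
    (hS : IsBackbone N A C) (hQ : IsBackbone N' A' C')
    (ε : ℝ) (hε : 0 < ε)
    (hN : ∀ i, ‖N' i - N i‖ ≤ ε) (hA : ∀ i, ‖A' i - A i‖ ≤ ε)
    (hC : ∀ i, ‖C' i - C i‖ ≤ ε)
    (lNA : ℝ) (hl : 0 < lNA)
    (hl1 : ∀ i, lNA ≤ ‖N i - A i‖) (hl2 : ∀ i, lNA ≤ ‖N' i - A' i‖)
    (LAC : ℝ) (hLAC1 : ∀ i, ‖C i - A i‖ ≤ LAC) (hLAC2 : ∀ i, ‖C' i - A' i‖ ≤ LAC)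
    (L : ℝ)
    (hL1 : ∀ i, ‖N i - A i‖ ≤ L) (hL2 : ∀ i, ‖C i - A i‖ ≤ L)
    (hL3 : ∀ (i : ℕ) (hi : i + 1 < m),
      ‖N ⟨i + 1, hi⟩ - C ⟨i, by omega⟩‖ ≤ L)
    (hL4 : ∀ i, ‖N' i - A' i‖ ≤ L) (hL5 : ∀ i, ‖C' i - A' i‖ ≤ L)
    (hL6 : ∀ (i : ℕ) (hi : i + 1 < m),
      ‖N' ⟨i + 1, hi⟩ - C' ⟨i, by omega⟩‖ ≤ L)
    (h₀ : ℝ) (hh : 0 < h₀)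
    (hh1 : ∀ i, h₀ ≤ ‖hT (N i) (A i) (C i)‖)
    (hh2 : ∀ i, h₀ ≤ ‖hT (N' i) (A' i) (C' i)‖)
    (K lam : ℝ) (hK : K = 1 / lNA + (2 / h₀) * (1 + 2 * LAC / lNA))
    (hlam : lam = 2 * (1 + 2 * L * K)) :
    Linf (BRI N A C) (BRI N' A' C') ≤ lam * ε := by
  -- basic positivity facts
  have i0 : Fin m := ⟨0, hm⟩
  have hLAC0 : (0:ℝ) ≤ LAC := le_trans (norm_nonneg _) (hLAC1 ⟨0, hm⟩)
  have hlL : lNA ≤ L := le_trans (hl1 ⟨0, hm⟩) (hL1 ⟨0, hm⟩)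
  have hLpos : (0:ℝ) < L := lt_of_lt_of_le hl hlL
  -- nonzero norms
  have hNA0 : ∀ i, ‖N i - A i‖ ≠ 0 := fun i => ne_of_gt (lt_of_lt_of_le hl (hl1 i))
  have hNA0' : ∀ i, ‖N' i - A' i‖ ≠ 0 := fun i => ne_of_gt (lt_of_lt_of_le hl (hl2 i))
  have hhT0 : ∀ i, ‖hT (N i) (A i) (C i)‖ ≠ 0 := fun i => ne_of_gt (lt_of_lt_of_le hh (hh1 i))
  have hhT0' : ∀ i, ‖hT (N' i) (A' i) (C' i)‖ ≠ 0 := fun i => ne_of_gt (lt_of_lt_of_le hh (hh2 i))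
  have hh0L : h₀ ≤ L :=
    le_trans (hh1 ⟨0, hm⟩) (le_trans (norm_hT_le _ _ _ (hNA0 ⟨0, hm⟩)) (hL2 ⟨0, hm⟩))
  have hKpos : (0:ℝ) < K := by
    rw [hK]
    have h1 : (0:ℝ) < 1 / lNA := by positivity
    have h2 : (0:ℝ) ≤ (2 / h₀) * (1 + 2 * LAC / lNA) := by positivity
    linarith
  -- unit vectors
  have hu1 : ∀ i, ‖uT (N i) (A i)‖ = 1 := fun i => norm_uT_s4 _ _ (hNA0 i)
  have hu1' : ∀ i, ‖uT (N' i) (A' i)‖ = 1 := fun i => norm_uT_s4 _ _ (hNA0' i)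
  have hv1 : ∀ i, ‖vT (N i) (A i) (C i)‖ = 1 := fun i => norm_normalize _ (hhT0 i)
  have hv1' : ∀ i, ‖vT (N' i) (A' i) (C' i)‖ = 1 := fun i => norm_normalize _ (hhT0' i)
  have hw1 : ∀ i, ‖wT (N i) (A i) (C i)‖ ≤ 1 := by
    intro i
    refine le_trans (norm_cross3_le _ _) ?_
    rw [hu1 i, hv1 i]; norm_num
  -- difference of bond vectors
  have hsub2 : ∀ (a b a' b' : EuclideanSpace ℝ (Fin 3)), ‖a' - a‖ ≤ ε → ‖b' - b‖ ≤ ε →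
      ‖(a - b) - (a' - b')‖ ≤ 2 * ε := by
    intro a b a' b' h1 h2
    have hid : (a - b) - (a' - b') = (b' - b) - (a' - a) := by abel
    rw [hid]
    calc ‖(b' - b) - (a' - a)‖ ≤ ‖b' - b‖ + ‖a' - a‖ := norm_sub_le _ _
      _ ≤ 2 * ε := by linarith
  have hNAd : ∀ i, ‖(N i - A i) - (N' i - A' i)‖ ≤ 2 * ε := fun i => hsub2 _ _ _ _ (hN i) (hA i)
  have hCAd : ∀ i, ‖(C i - A i) - (C' i - A' i)‖ ≤ 2 * ε := fun i => hsub2 _ _ _ _ (hC i) (hA i)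
  have hANd : ∀ i, ‖(A i - N i) - (A' i - N' i)‖ ≤ 2 * ε := fun i => hsub2 _ _ _ _ (hA i) (hN i)
  -- u difference
  have hud : ∀ i, ‖uT (N i) (A i) - uT (N' i) (A' i)‖ ≤ 2 / lNA * (2 * ε) := by
    intro i
    refine le_trans (normalize_lip _ _ lNA hl (hl1 i) (hl2 i)) ?_
    have := hNAd i
    have h2 : (0:ℝ) ≤ 2 / lNA := by positivity
    exact mul_le_mul_of_nonneg_left this h2
  -- h difference
  have hhd : ∀ i, ‖hT (N i) (A i) (C i) - hT (N' i) (A' i) (C' i)‖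
      ≤ 2 * (2 * ε) + 2 * LAC * (2 / lNA * (2 * ε)) := by
    intro i
    rw [hT_eq _ _ _ (hNA0 i), hT_eq _ _ _ (hNA0' i)]
    exact proj_diff _ _ _ _ (hu1 i) (hu1' i) _ _ _ (hCAd i) (hLAC2 i) (hud i) (by positivity)
  -- v difference
  have hvd : ∀ i, ‖vT (N i) (A i) (C i) - vT (N' i) (A' i) (C' i)‖
      ≤ 2 / h₀ * (2 * (2 * ε) + 2 * LAC * (2 / lNA * (2 * ε))) := by
    intro i
    refine le_trans (normalize_lip _ _ h₀ hh (hh1 i) (hh2 i)) ?_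
    exact mul_le_mul_of_nonneg_left (hhd i) (by positivity)
  -- the three basis-vector difference bounds against 4Kε
  have hK1 : 1 / lNA ≤ K := by
    rw [hK]
    have : (0:ℝ) ≤ (2 / h₀) * (1 + 2 * LAC / lNA) := by positivity
    linarith
  have hK2 : (2 / h₀) * (1 + 2 * LAC / lNA) ≤ K := by
    rw [hK]
    have : (0:ℝ) ≤ 1 / lNA := by positivity
    linarith
  have hudK : ∀ i, ‖uT (N i) (A i) - uT (N' i) (A' i)‖ ≤ 4 * K * ε := by
    intro i
    refine le_trans (hud i) ?_
    have he : 2 / lNA * (2 * ε) = 4 * (1 / lNA) * ε := by ring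
    rw [he]
    nlinarith [hε.le]
  have hvdK : ∀ i, ‖vT (N i) (A i) (C i) - vT (N' i) (A' i) (C' i)‖ ≤ 4 * K * ε := by
    intro i
    refine le_trans (hvd i) ?_
    have he : 2 / h₀ * (2 * (2 * ε) + 2 * LAC * (2 / lNA * (2 * ε)))
        = 4 * ((2 / h₀) * (1 + 2 * LAC / lNA)) * ε := by
      field_simp
      ring
    rw [he]
    nlinarith [hε.le]
  have hwdK : ∀ i, ‖wT (N i) (A i) (C i) - wT (N' i) (A' i) (C' i)‖ ≤ 4 * K * ε := by
    intro i
    rw [wT, wT, cross3_sub_sub]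
    have b1 : ‖cross3 (uT (N i) (A i) - uT (N' i) (A' i)) (vT (N i) (A i) (C i))‖
        ≤ ‖uT (N i) (A i) - uT (N' i) (A' i)‖ := by
      refine le_trans (norm_cross3_le _ _) ?_
      rw [hv1 i, mul_one]
    have b2 : ‖cross3 (uT (N' i) (A' i)) (vT (N i) (A i) (C i) - vT (N' i) (A' i) (C' i))‖
        ≤ ‖vT (N i) (A i) (C i) - vT (N' i) (A' i) (C' i)‖ := by
      refine le_trans (norm_cross3_le _ _) ?_
      rw [hu1' i, one_mul]
    have hsum : 2 / lNA * (2 * ε) + 2 / h₀ * (2 * (2 * ε) + 2 * LAC * (2 / lNA * (2 * ε)))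
        = 4 * K * ε := by
      rw [hK]
      field_simp
      ring
    calc ‖cross3 (uT (N i) (A i) - uT (N' i) (A' i)) (vT (N i) (A i) (C i))
          + cross3 (uT (N' i) (A' i)) (vT (N i) (A i) (C i) - vT (N' i) (A' i) (C' i))‖
        ≤ ‖cross3 (uT (N i) (A i) - uT (N' i) (A' i)) (vT (N i) (A i) (C i))‖
          + ‖cross3 (uT (N' i) (A' i)) (vT (N i) (A i) (C i) - vT (N' i) (A' i) (C' i))‖ :=
          norm_add_le _ _
      _ ≤ ‖uT (N i) (A i) - uT (N' i) (A' i)‖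
          + ‖vT (N i) (A i) (C i) - vT (N' i) (A' i) (C' i)‖ := by linarith
      _ ≤ 2 / lNA * (2 * ε) + 2 / h₀ * (2 * (2 * ε) + 2 * LAC * (2 / lNA * (2 * ε))) := by
          have := hud i; have := hvd i; linarith
      _ = 4 * K * ε := hsum
  -- generic entry bound
  have entry : ∀ (d d' e e' : EuclideanSpace ℝ (Fin 3)),
      ‖d - d'‖ ≤ 2 * ε → ‖d'‖ ≤ L → ‖e‖ ≤ 1 → ‖e - e'‖ ≤ 4 * K * ε →
      |⟪d, e⟫ - ⟪d', e'⟫| ≤ lam * ε := by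
    intro d d' e e' h1 h2 h3 h4
    refine le_trans (inner_sub_abs d d' e e') ?_
    have b1 : ‖d - d'‖ * ‖e‖ ≤ 2 * ε * 1 :=
      mul_le_mul h1 h3 (norm_nonneg _) (by linarith)
    have b2 : ‖d'‖ * ‖e - e'‖ ≤ L * (4 * K * ε) :=
      mul_le_mul h2 h4 (norm_nonneg _) hLpos.le
    have he : 2 * ε * 1 + L * (4 * K * ε) = lam * ε := by rw [hlam]; ring
    linarith
  have hlam2 : 2 * ε ≤ lam * ε := by
    rw [hlam]
    nlinarith [mul_pos hLpos hKpos, hε.le]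
  have hlam0 : 0 ≤ lam * ε := by linarith
  have key : ∀ (i : Fin m) (j : Fin 9), |BRI N A C i j - BRI N' A' C' i j| ≤ lam * ε := by
    intro i j
    by_cases hi0 : (i : ℕ) = 0
    · simp only [BRI, if_pos hi0]
      fin_cases j
      · show |‖N i - A i‖ - ‖N' i - A' i‖| ≤ lam * ε
        have h1 := abs_norm_sub_norm_le (N i - A i) (N' i - A' i)
        have h2 := hNAd i
        linarith
      · exact entry _ _ _ _ (hCAd i) (hL5 i) (le_of_eq (hu1 i)) (hudK i)
      · show |‖hT (N i) (A i) (C i)‖ - ‖hT (N' i) (A' i) (C' i)‖| ≤ lam * ε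
        have h1 : |‖hT (N i) (A i) (C i)‖ - ‖hT (N' i) (A' i) (C' i)‖|
            ≤ ‖hT (N i) (A i) (C i) - hT (N' i) (A' i) (C' i)‖ :=
          abs_norm_sub_norm_le _ _
        have h2 := hhd i
        have hX1 : (1:ℝ) ≤ 1 + 2 * LAC / lNA := by
          have : (0:ℝ) ≤ 2 * LAC / lNA := by positivity
          linarith
        have hLK : 2 * (1 + 2 * LAC / lNA) ≤ L * K := by
          have step1 : L * ((2 / h₀) * (1 + 2 * LAC / lNA)) ≤ L * K :=
            mul_le_mul_of_nonneg_left hK2 hLpos.le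
          have step2 : 2 * (1 + 2 * LAC / lNA) ≤ L * ((2 / h₀) * (1 + 2 * LAC / lNA)) := by
            have hdiv : (1:ℝ) ≤ L / h₀ := (one_le_div hh).mpr hh0L
            have he : L * ((2 / h₀) * (1 + 2 * LAC / lNA))
                = (L / h₀) * (2 * (1 + 2 * LAC / lNA)) := by ring
            rw [he]
            nlinarith
          linarith
        have e1 : 2 * (2 * ε) + 2 * LAC * (2 / lNA * (2 * ε)) = 4 * (1 + 2 * LAC / lNA) * ε := by
          field_simp
          ring
        rw [e1] at h2
        have e2 : lam * ε = 2 * ε + 4 * (L * K) * ε := by rw [hlam]; ring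
        rw [e2]
        nlinarith [hε.le]
      · show |(0:ℝ) - 0| ≤ lam * ε
        simpa using hlam0
      · show |(0:ℝ) - 0| ≤ lam * ε
        simpa using hlam0
      · show |(0:ℝ) - 0| ≤ lam * ε
        simpa using hlam0
      · show |(0:ℝ) - 0| ≤ lam * ε
        simpa using hlam0
      · show |(0:ℝ) - 0| ≤ lam * ε
        simpa using hlam0
      · show |(0:ℝ) - 0| ≤ lam * ε
        simpa using hlam0
    · simp only [BRI, if_neg hi0]
      have hklt : (i : ℕ) - 1 + 1 < m := by omega
      have hieq : (⟨(i : ℕ) - 1 + 1, hklt⟩ : Fin m) = i := by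
        ext
        simp
        omega
      have hNCL : ‖N' i - C' ⟨(i : ℕ) - 1, lt_of_le_of_lt (Nat.sub_le _ _) i.isLt⟩‖ ≤ L := by
        have := hL6 ((i : ℕ) - 1) hklt
        rw [hieq] at this
        exact this
      have hNCd : ‖(N i - C ⟨(i : ℕ) - 1, lt_of_le_of_lt (Nat.sub_le _ _) i.isLt⟩)
          - (N' i - C' ⟨(i : ℕ) - 1, lt_of_le_of_lt (Nat.sub_le _ _) i.isLt⟩)‖ ≤ 2 * ε :=
        hsub2 _ _ _ _ (hN i) (hC _)
      have hANL : ‖A' i - N' i‖ ≤ L := by rw [norm_sub_rev]; exact hL4 i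
      fin_cases j
      · exact entry _ _ _ _ hNCd hNCL (le_of_eq (hu1 _)) (hudK _)
      · exact entry _ _ _ _ hNCd hNCL (le_of_eq (hv1 _)) (hvdK _)
      · exact entry _ _ _ _ hNCd hNCL (hw1 _) (hwdK _)
      · exact entry _ _ _ _ (hANd i) hANL (le_of_eq (hu1 _)) (hudK _)
      · exact entry _ _ _ _ (hANd i) hANL (le_of_eq (hv1 _)) (hvdK _)
      · exact entry _ _ _ _ (hANd i) hANL (hw1 _) (hwdK _)
      · exact entry _ _ _ _ (hCAd i) (hL5 i) (le_of_eq (hu1 _)) (hudK _)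
      · exact entry _ _ _ _ (hCAd i) (hL5 i) (le_of_eq (hv1 _)) (hvdK _)
      · exact entry _ _ _ _ (hCAd i) (hL5 i) (hw1 _) (hwdK _)
  have hne : Nonempty (Fin m × Fin 9) := ⟨(⟨0, hm⟩, 0)⟩
  exact ciSup_le fun q => key q.1 q.2
end

section
/- Let N, A, C and N', A', C' be two non-collinear triples of points in EuclideanSpace ℝ (Fin 3) with ‖N' - N‖ ≤ ε, ‖A' - A‖ ≤ ε, ‖C' - C‖ ≤ ε. Let l_{N,A} > 0 be a lower bound for both ‖N - A‖ and ‖N' - A'‖, and let L_{A,C} be an upper bound for both ‖C - A‖ and ‖C' - A'‖. Then ‖h' - h‖ ≤ 4ε·(1 + 2·L_{A,C}/l_{N,A}); in particular, by the triangle inequality for norms, | ‖h'‖ - ‖h‖ | ≤ 4ε·(1 + 2·L_{A,C}/l_{N,A}). -/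
open scoped RealInnerProductSpace

lemma hT_eq_proj (N A C : EuclideanSpace ℝ (Fin 3)) :
    hT N A C = (C - A) - ⟪C - A, uT N A⟫ • uT N A := by
  unfold hT bT uT
  congr 1
  rw [real_inner_smul_right, smul_smul]
  congr 1
  rw [div_eq_mul_inv, sq, mul_inv]
  ring

lemma unit_diff_le (x x' : EuclideanSpace ℝ (Fin 3)) (l : ℝ) (hl : 0 < l)
    (h1 : l ≤ ‖x‖) (h2 : l ≤ ‖x'‖) :
    ‖‖x'‖⁻¹ • x' - ‖x‖⁻¹ • x‖ ≤ 2 * ‖x' - x‖ / l := by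
  have hx : (0:ℝ) < ‖x‖ := lt_of_lt_of_le hl h1
  have hx' : (0:ℝ) < ‖x'‖ := lt_of_lt_of_le hl h2
  have key : ‖x'‖⁻¹ • x' - ‖x‖⁻¹ • x
      = ‖x'‖⁻¹ • (x' - x) + (‖x'‖⁻¹ - ‖x‖⁻¹) • x := by
    rw [smul_sub, sub_smul]; abel
  rw [key]
  have hterm1 : ‖‖x'‖⁻¹ • (x' - x)‖ ≤ ‖x' - x‖ / ‖x'‖ := by
    rw [norm_smul, Real.norm_eq_abs, abs_of_pos (inv_pos.mpr hx')]
    rw [div_eq_inv_mul]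
  have hterm2 : ‖(‖x'‖⁻¹ - ‖x‖⁻¹) • x‖ ≤ ‖x' - x‖ / ‖x'‖ := by
    rw [norm_smul, Real.norm_eq_abs]
    have heq : ‖x'‖⁻¹ - ‖x‖⁻¹ = (‖x‖ - ‖x'‖) / (‖x‖ * ‖x'‖) := by
      field_simp
    rw [heq, abs_div, abs_of_pos (mul_pos hx hx')]
    have hab : |‖x‖ - ‖x'‖| ≤ ‖x' - x‖ := by
      rw [norm_sub_rev]
      exact abs_norm_sub_norm_le x x'
    calc |‖x‖ - ‖x'‖| / (‖x‖ * ‖x'‖) * ‖x‖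
        = |‖x‖ - ‖x'‖| / ‖x'‖ := by field_simp
      _ ≤ ‖x' - x‖ / ‖x'‖ := by gcongr
  calc ‖‖x'‖⁻¹ • (x' - x) + (‖x'‖⁻¹ - ‖x‖⁻¹) • x‖
      ≤ ‖‖x'‖⁻¹ • (x' - x)‖ + ‖(‖x'‖⁻¹ - ‖x‖⁻¹) • x‖ := norm_add_le _ _
    _ ≤ ‖x' - x‖ / ‖x'‖ + ‖x' - x‖ / ‖x'‖ := add_le_add hterm1 hterm2
    _ = 2 * ‖x' - x‖ / ‖x'‖ := by ring
    _ ≤ 2 * ‖x' - x‖ / l := by gcongr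

lemma proj_decomp (y y' u u' : EuclideanSpace ℝ (Fin 3)) :
    ((y' - ⟪y', u'⟫ • u') - (y - ⟪y, u⟫ • u))
      = (y' - y) - (⟪y' - y, u'⟫ • u' + ⟪y, u' - u⟫ • u' + ⟪y, u⟫ • (u' - u)) := by
  rw [inner_sub_left, inner_sub_right, sub_smul, sub_smul, smul_sub]
  abel

/-- **Proposition (perturbation of the height vector).**
If `N', A', C'` are `ε`-perturbations of a non-collinear triple `N, A, C`, with
`l_{N,A} > 0` a lower bound for `‖N - A‖, ‖N' - A'‖` and `L_{A,C}` an upper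
bound for `‖C - A‖, ‖C' - A'‖`, then `‖h' - h‖ ≤ 4ε·(1 + 2·L_{A,C}/l_{N,A})`;
in particular `|‖h'‖ - ‖h‖| ≤ 4ε·(1 + 2·L_{A,C}/l_{N,A})`. -/
theorem hT_perturbation
    (N A C N' A' C' : EuclideanSpace ℝ (Fin 3))
    (hnc : ¬ Collinear ℝ ({N, A, C} : Set (EuclideanSpace ℝ (Fin 3))))
    (hnc' : ¬ Collinear ℝ ({N', A', C'} : Set (EuclideanSpace ℝ (Fin 3))))
    (ε : ℝ) (hN : ‖N' - N‖ ≤ ε) (hA : ‖A' - A‖ ≤ ε) (hC : ‖C' - C‖ ≤ ε)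
    (lNA : ℝ) (hl : 0 < lNA) (hlb : lNA ≤ ‖N - A‖) (hlb' : lNA ≤ ‖N' - A'‖)
    (LAC : ℝ) (hLb : ‖C - A‖ ≤ LAC) (hLb' : ‖C' - A'‖ ≤ LAC) :
    ‖hT N' A' C' - hT N A C‖ ≤ 4 * ε * (1 + 2 * LAC / lNA) ∧
      |‖hT N' A' C'‖ - ‖hT N A C‖| ≤ 4 * ε * (1 + 2 * LAC / lNA) := by
  have hε : 0 ≤ ε := le_trans (norm_nonneg _) hN
  have hL : 0 ≤ LAC := le_trans (norm_nonneg _) hLb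
  set x := N - A with hxdef
  set x' := N' - A' with hx'def
  set y := C - A with hydef
  set y' := C' - A' with hy'def
  set u := uT N A with hudef
  set u' := uT N' A' with hu'def
  have hx : (0:ℝ) < ‖x‖ := lt_of_lt_of_le hl hlb
  have hx' : (0:ℝ) < ‖x'‖ := lt_of_lt_of_le hl hlb'
  have hu1 : ‖u‖ = 1 := by
    rw [hudef, uT]
    exact norm_smul_inv_norm (norm_pos_iff.mp hx)
  have hu'1 : ‖u'‖ = 1 := by
    rw [hu'def, uT]
    exact norm_smul_inv_norm (norm_pos_iff.mp hx')
  -- bounds on the perturbed differences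
  have hdy : ‖y' - y‖ ≤ 2 * ε := by
    have : y' - y = (C' - C) - (A' - A) := by rw [hy'def, hydef]; abel
    rw [this]
    calc ‖(C' - C) - (A' - A)‖ ≤ ‖C' - C‖ + ‖A' - A‖ := norm_sub_le _ _
      _ ≤ 2 * ε := by linarith
  have hdx : ‖x' - x‖ ≤ 2 * ε := by
    have : x' - x = (N' - N) - (A' - A) := by rw [hx'def, hxdef]; abel
    rw [this]
    calc ‖(N' - N) - (A' - A)‖ ≤ ‖N' - N‖ + ‖A' - A‖ := norm_sub_le _ _
      _ ≤ 2 * ε := by linarith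
  have hdu : ‖u' - u‖ ≤ 4 * ε / lNA := by
    have h := unit_diff_le x x' lNA hl hlb hlb'
    rw [hudef, hu'def, uT, uT, ← hxdef, ← hx'def] at *
    calc ‖‖x'‖⁻¹ • x' - ‖x‖⁻¹ • x‖ ≤ 2 * ‖x' - x‖ / lNA := h
      _ ≤ 4 * ε / lNA := by
          have h4 : 2 * ‖x' - x‖ ≤ 4 * ε := by linarith
          gcongr
  have key : ‖hT N' A' C' - hT N A C‖ ≤ 4 * ε * (1 + 2 * LAC / lNA) := by
    have hrw : hT N' A' C' - hT N A C
        = (y' - y) - (⟪y' - y, u'⟫ • u' + ⟪y, u' - u⟫ • u' + ⟪y, u⟫ • (u' - u)) := by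
      rw [hT_eq_proj, hT_eq_proj]
      exact proj_decomp (C - A) (C' - A') (uT N A) (uT N' A')
    rw [hrw]
    have b1 : ‖⟪y' - y, u'⟫ • u'‖ ≤ 2 * ε := by
      rw [norm_smul, hu'1, mul_one, Real.norm_eq_abs]
      calc |⟪y' - y, u'⟫| ≤ ‖y' - y‖ * ‖u'‖ := abs_real_inner_le_norm _ _
        _ = ‖y' - y‖ := by rw [hu'1, mul_one]
        _ ≤ 2 * ε := hdy
    have b2 : ‖⟪y, u' - u⟫ • u'‖ ≤ LAC * (4 * ε / lNA) := by
      rw [norm_smul, hu'1, mul_one, Real.norm_eq_abs]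
      calc |⟪y, u' - u⟫| ≤ ‖y‖ * ‖u' - u‖ := abs_real_inner_le_norm _ _
        _ ≤ LAC * (4 * ε / lNA) := by
            apply mul_le_mul hLb hdu (norm_nonneg _) hL
    have b3 : ‖⟪y, u⟫ • (u' - u)‖ ≤ LAC * (4 * ε / lNA) := by
      rw [norm_smul, Real.norm_eq_abs]
      have : |⟪y, u⟫| ≤ LAC := by
        calc |⟪y, u⟫| ≤ ‖y‖ * ‖u‖ := abs_real_inner_le_norm _ _
          _ = ‖y‖ := by rw [hu1, mul_one]
          _ ≤ LAC := hLb
      apply mul_le_mul this hdu (norm_nonneg _) hL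
    have hfin : (2*ε) + ((2*ε) + LAC * (4 * ε / lNA) + LAC * (4 * ε / lNA))
        = 4 * ε * (1 + 2 * LAC / lNA) := by
      field_simp
      ring
    calc ‖(y' - y) - (⟪y' - y, u'⟫ • u' + ⟪y, u' - u⟫ • u' + ⟪y, u⟫ • (u' - u))‖
        ≤ ‖y' - y‖ + ‖⟪y' - y, u'⟫ • u' + ⟪y, u' - u⟫ • u' + ⟪y, u⟫ • (u' - u)‖ :=
          norm_sub_le _ _
      _ ≤ ‖y' - y‖ + (‖⟪y' - y, u'⟫ • u' + ⟪y, u' - u⟫ • u'‖ + ‖⟪y, u⟫ • (u' - u)‖) := by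
          gcongr; exact norm_add_le _ _
      _ ≤ ‖y' - y‖ + (‖⟪y' - y, u'⟫ • u'‖ + ‖⟪y, u' - u⟫ • u'‖ + ‖⟪y, u⟫ • (u' - u)‖) := by
          gcongr; exact norm_add_le _ _
      _ ≤ (2*ε) + ((2*ε) + LAC * (4 * ε / lNA) + LAC * (4 * ε / lNA)) := by
          gcongr
      _ = 4 * ε * (1 + 2 * LAC / lNA) := hfin
  exact ⟨key, le_trans (abs_norm_sub_norm_le _ _) key⟩
end

section
/- Let N, A, C and N', A', C' be two non-collinear triples of points in EuclideanSpace ℝ (Fin 3) with ‖N' - N‖ ≤ ε, ‖A' - A‖ ≤ ε, ‖C' - C‖ ≤ ε. Let l_{N,A} > 0 be a lower bound for both ‖N - A‖ and ‖N' - A'‖, and let L_{A,C} be an upper bound for both ‖C - A‖ and ‖C' - A'‖. Then the first inner-product coordinate satisfies |⟪C' - A', u'⟫ - ⟪C - A, u⟫| ≤ 2ε·(1 + 2·L_{A,C}/l_{N,A}). -/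
open scoped RealInnerProductSpace

lemma unit_diff {E : Type*} [NormedAddCommGroup E] [NormedSpace ℝ E]
    (x y : E) (hx : x ≠ 0) (hy : y ≠ 0) :
    ‖‖x‖⁻¹ • x - ‖y‖⁻¹ • y‖ ≤ 2 * ‖x - y‖ / ‖x‖ := by
  have hx0 : (0:ℝ) < ‖x‖ := norm_pos_iff.mpr hx
  have hy0 : (0:ℝ) < ‖y‖ := norm_pos_iff.mpr hy
  have key : ‖x‖⁻¹ • x - ‖y‖⁻¹ • y = ‖x‖⁻¹ • (x - y) + (‖x‖⁻¹ - ‖y‖⁻¹) • y := by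
    rw [smul_sub, sub_smul]; abel
  rw [key]
  have h1 : ‖‖x‖⁻¹ • (x - y)‖ = ‖x - y‖ / ‖x‖ := by
    rw [norm_smul, norm_inv, norm_norm]; ring
  have h3 : |‖y‖ - ‖x‖| ≤ ‖x - y‖ := by
    rw [abs_sub_comm]; exact abs_norm_sub_norm_le x y
  have h2 : ‖(‖x‖⁻¹ - ‖y‖⁻¹) • y‖ ≤ ‖x - y‖ / ‖x‖ := by
    rw [norm_smul, Real.norm_eq_abs]
    have he : ‖x‖⁻¹ - ‖y‖⁻¹ = (‖y‖ - ‖x‖) / (‖x‖ * ‖y‖) := by field_simp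
    rw [he, abs_div, abs_of_pos (mul_pos hx0 hy0)]
    have heq : |‖y‖ - ‖x‖| / (‖x‖ * ‖y‖) * ‖y‖ = |‖y‖ - ‖x‖| / ‖x‖ := by field_simp
    rw [heq]
    gcongr
  calc ‖‖x‖⁻¹ • (x - y) + (‖x‖⁻¹ - ‖y‖⁻¹) • y‖
      ≤ ‖‖x‖⁻¹ • (x - y)‖ + ‖(‖x‖⁻¹ - ‖y‖⁻¹) • y‖ := norm_add_le _ _
    _ ≤ ‖x - y‖ / ‖x‖ + ‖x - y‖ / ‖x‖ := by rw [h1]; linarith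
    _ = 2 * ‖x - y‖ / ‖x‖ := by ring

/-- **Proposition (perturbation of the first inner-product coordinate).**
If `N', A', C'` are `ε`-perturbations of a non-collinear triple `N, A, C`, with
`l_{N,A} > 0` a lower bound for `‖N - A‖, ‖N' - A'‖` and `L_{A,C}` an upper
bound for `‖C - A‖, ‖C' - A'‖`, then
`|⟪C' - A', u'⟫ - ⟪C - A, u⟫| ≤ 2ε·(1 + 2·L_{A,C}/l_{N,A})`. -/
theorem xC_perturbation
    (N A C N' A' C' : EuclideanSpace ℝ (Fin 3))
    (hnc : ¬ Collinear ℝ ({N, A, C} : Set (EuclideanSpace ℝ (Fin 3))))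
    (hnc' : ¬ Collinear ℝ ({N', A', C'} : Set (EuclideanSpace ℝ (Fin 3))))
    (ε : ℝ) (hN : ‖N' - N‖ ≤ ε) (hA : ‖A' - A‖ ≤ ε) (hC : ‖C' - C‖ ≤ ε)
    (lNA : ℝ) (hl : 0 < lNA) (hlb : lNA ≤ ‖N - A‖) (hlb' : lNA ≤ ‖N' - A'‖)
    (LAC : ℝ) (hLb : ‖C - A‖ ≤ LAC) (hLb' : ‖C' - A'‖ ≤ LAC) :
    |⟪C' - A', uT N' A'⟫ - ⟪C - A, uT N A⟫| ≤ 2 * ε * (1 + 2 * LAC / lNA) := by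
  have hε : 0 ≤ ε := le_trans (norm_nonneg _) hN
  have hL : 0 ≤ LAC := le_trans (norm_nonneg _) hLb
  have hd0 : N - A ≠ 0 := by
    intro h; rw [h, norm_zero] at hlb; linarith
  have hd0' : N' - A' ≠ 0 := by
    intro h; rw [h, norm_zero] at hlb'; linarith
  have hu1 : ‖uT N' A'‖ = 1 := by
    rw [uT, norm_smul, norm_inv, norm_norm, inv_mul_cancel₀ (norm_ne_zero_iff.mpr hd0')]
  -- bound on the difference of the direction vectors
  have hdd : ‖(N' - A') - (N - A)‖ ≤ 2 * ε := by
    have : (N' - A') - (N - A) = (N' - N) - (A' - A) := by abel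
    rw [this]
    calc ‖(N' - N) - (A' - A)‖ ≤ ‖N' - N‖ + ‖A' - A‖ := norm_sub_le _ _
      _ ≤ 2 * ε := by linarith
  have hcc : ‖(C' - A') - (C - A)‖ ≤ 2 * ε := by
    have : (C' - A') - (C - A) = (C' - C) - (A' - A) := by abel
    rw [this]
    calc ‖(C' - C) - (A' - A)‖ ≤ ‖C' - C‖ + ‖A' - A‖ := norm_sub_le _ _
      _ ≤ 2 * ε := by linarith
  have hud : ‖uT N' A' - uT N A‖ ≤ 2 * (2 * ε) / lNA := by
    have h := unit_diff (N' - A') (N - A) hd0' hd0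
    have h2 : 2 * ‖(N' - A') - (N - A)‖ / ‖N' - A'‖ ≤ 2 * (2 * ε) / lNA := by
      apply div_le_div₀ (by positivity) (by linarith) hl hlb'
    exact le_trans (by simpa [uT] using h) h2
  have hsplit : ⟪C' - A', uT N' A'⟫ - ⟪C - A, uT N A⟫
      = ⟪(C' - A') - (C - A), uT N' A'⟫ + ⟪C - A, uT N' A' - uT N A⟫ := by
    simp only [inner_sub_left, inner_sub_right]; ring
  rw [hsplit]
  have h1 : |⟪(C' - A') - (C - A), uT N' A'⟫| ≤ 2 * ε := by
    calc |⟪(C' - A') - (C - A), uT N' A'⟫| ≤ ‖(C' - A') - (C - A)‖ * ‖uT N' A'‖ :=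
          abs_real_inner_le_norm _ _
      _ = ‖(C' - A') - (C - A)‖ := by rw [hu1, mul_one]
      _ ≤ 2 * ε := hcc
  have h2 : |⟪C - A, uT N' A' - uT N A⟫| ≤ LAC * (2 * (2 * ε) / lNA) := by
    calc |⟪C - A, uT N' A' - uT N A⟫| ≤ ‖C - A‖ * ‖uT N' A' - uT N A‖ :=
          abs_real_inner_le_norm _ _
      _ ≤ LAC * (2 * (2 * ε) / lNA) := by
          apply mul_le_mul hLb hud (norm_nonneg _) hL
  have hfin : 2 * ε + LAC * (2 * (2 * ε) / lNA) = 2 * ε * (1 + 2 * LAC / lNA) := by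
    field_simp
  calc |⟪(C' - A') - (C - A), uT N' A'⟫ + ⟪C - A, uT N' A' - uT N A⟫|
      ≤ |⟪(C' - A') - (C - A), uT N' A'⟫| + |⟪C - A, uT N' A' - uT N A⟫| := abs_add_le _ _
    _ ≤ 2 * ε + LAC * (2 * (2 * ε) / lNA) := add_le_add h1 h2
    _ = 2 * ε * (1 + 2 * LAC / lNA) := hfin
end
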